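/- arXiv:math/0109219 — 10 statements merged into one kernel-verified Lean document; each statement's English description precedes it below -/
import Mathlib

section
/- For all n ≥ 1, the number of permutations of [n] avoiding the patterns 123, 132, and 213 equals the Fibonacci number F_{n+1}. -/
/-- A permutation `π` of `Fin n` avoids the pattern given (in one-line notation) by the
list `s` when there is no increasing choice of positions along which the values of `π`
have the same pairwise comparisons as the entries of `s`. -/
def AvoidsPat {n : ℕ} (π : Equiv.Perm (Fin n)) (s : List ℕ) : Prop :=
  ¬ ∃ f : Fin s.length ↪o Fin n,
      ∀ i j : Fin s.length, s.get i < s.get j ↔ π (f i) < π (f j)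

/-- The number of permutations of `Fin n` avoiding every pattern in `R`. -/
noncomputable def AvoidCount (R : List (List ℕ)) (n : ℕ) : ℕ :=
  Nat.card {π : Equiv.Perm (Fin n) // ∀ s ∈ R, AvoidsPat π s}

/-- The `k`-generalized Fibonacci numbers: `F_{k,n} = 0` for `n ≤ 0`, `F_{k,1} = 1`,
`F_{k,n} = ∑_{i=1}^{k} F_{k,n-i}` for `n ≥ 2` (terms with nonpositive index are `0`). -/
def genFib (k : ℕ) : ℕ → ℕ
  | 0 => 0
  | 1 => 1
  | n + 2 => ∑ i ∈ Finset.range k, genFib k (n + 1 - i)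

/-! Avoiding `123`, `132` and `213` means that every triple of positions starts above where
it ends, i.e. `π k < π i` whenever `k ≥ i + 2`. After complementing the values this reads
`σ i < σ k` whenever `k ≥ i + 2`, and such a `σ` of length `n + 2` is a direct sum `τ ⊕ 1`
(if it fixes the last position) or `τ ⊕ 21` (otherwise), with `τ` of the same kind. So the
counts obey the Fibonacci recursion, starting from one permutation each of length `0` and `1`. -/

open Equiv

namespace Equiv.Perm

variable {m n : ℕ}

def directSum (α : Perm (Fin m)) (β : Perm (Fin n)) : Perm (Fin (m + n)) :=
  finSumFinEquiv.permCongr (α.sumCongr β)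

@[simp] lemma directSum_castAdd (α : Perm (Fin m)) (β : Perm (Fin n)) (i : Fin m) :
    α.directSum β (Fin.castAdd n i) = Fin.castAdd n (α i) := by
  simp [directSum]

@[simp] lemma directSum_natAdd (α : Perm (Fin m)) (β : Perm (Fin n)) (j : Fin n) :
    α.directSum β (Fin.natAdd m j) = Fin.natAdd m (β j) := by
  simp [directSum]

lemma directSum_left_injective (β : Perm (Fin n)) :
    Function.Injective fun α : Perm (Fin m) ↦ α.directSum β := by
  intro α α' h
  ext i : 1
  simpa using congr($h (Fin.castAdd n i))

lemma exists_eq_directSum (σ : Perm (Fin (m + n)))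
    (h : ∀ i : Fin m, (σ (Fin.castAdd n i) : ℕ) < m) :
    ∃ (α : Perm (Fin m)) (β : Perm (Fin n)), σ = α.directSum β := by
  have hmaps : Set.MapsTo (finSumFinEquiv.symm.permCongr σ)
      (Set.range Sum.inl) (Set.range Sum.inl) := by
    rintro _ ⟨i, rfl⟩
    refine ⟨⟨_, h i⟩, ?_⟩
    rw [permCongr_apply, symm_symm, finSumFinEquiv_apply_left, eq_comm, symm_apply_eq,
      finSumFinEquiv_apply_left]
    rfl
  obtain ⟨⟨α, β⟩, hαβ⟩ := mem_sumCongrHom_range_of_perm_mapsTo_inl hmaps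
  refine ⟨α, β, ?_⟩
  rw [sumCongrHom_apply] at hαβ
  rw [directSum, hαβ, ← permCongr_symm, apply_symm_apply]

def StrictMonoAtGapTwo (σ : Perm (Fin n)) : Prop :=
  ∀ i k : Fin n, i.val + 2 ≤ k.val → σ i < σ k

lemma strictMonoAtGapTwo_of_le_two (σ : Perm (Fin n)) (hn : n ≤ 2) : StrictMonoAtGapTwo σ :=
  fun _ k _ ↦ by omega

lemma strictMonoAtGapTwo_directSum_iff {α : Perm (Fin m)} {β : Perm (Fin n)} :
    StrictMonoAtGapTwo (α.directSum β) ↔ StrictMonoAtGapTwo α ∧ StrictMonoAtGapTwo β := by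
  refine ⟨fun h ↦ ⟨fun i k hik ↦ ?_, fun i k hik ↦ ?_⟩,
    fun ⟨hα, hβ⟩ i k hik ↦ ?_⟩
  · simpa [(Fin.strictMono_castAdd n).lt_iff_lt] using
      h (Fin.castAdd n i) (Fin.castAdd n k) (by simpa using hik)
  · simpa using h (Fin.natAdd m i) (Fin.natAdd m k) (by simp only [Fin.val_natAdd]; omega)
  · induction i using Fin.addCases with
    | left i => induction k using Fin.addCases with
      | left k =>
        simpa [(Fin.strictMono_castAdd n).lt_iff_lt] using hα i k (by simpa using hik)
      | right k =>
        rw [directSum_castAdd, directSum_natAdd, Fin.lt_def, Fin.val_castAdd, Fin.val_natAdd]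
        omega
    | right i => induction k using Fin.addCases with
      | left k => simp only [Fin.val_natAdd, Fin.val_castAdd] at hik; omega
      | right k => simpa using hβ i k (by simp only [Fin.val_natAdd] at hik; omega)

lemma exists_eq_directSum_one (σ : Perm (Fin (n + 1))) (h : σ (Fin.last n) = Fin.last n) :
    ∃ τ : Perm (Fin n), σ = τ.directSum 1 := by
  have hlt (i : Fin n) : (σ (Fin.castAdd 1 i) : ℕ) < n :=
    Fin.val_lt_last (h ▸ σ.injective.ne (Fin.castSucc_lt_last i).ne)
  obtain ⟨α, β, rfl⟩ := exists_eq_directSum σ hlt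
  exact ⟨α, by rw [Subsingleton.elim β 1]⟩

lemma directSum_one_apply_last (τ : Perm (Fin (n + 1))) :
    τ.directSum (1 : Perm (Fin 1)) (Fin.last (n + 1)) = Fin.last (n + 1) :=
  directSum_natAdd τ 1 0

lemma directSum_swap_apply_last (τ : Perm (Fin n)) :
    (τ.directSum (swap 0 1 : Perm (Fin 2)) (Fin.last (n + 1)) : ℕ) = n := by
  have h := directSum_natAdd τ (swap 0 1 : Perm (Fin 2)) 1
  rw [swap_apply_right] at h
  exact congr(Fin.val $h)

lemma StrictMonoAtGapTwo.exists_eq_directSum_swap {σ : Perm (Fin (n + 2))}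
    (hσ : StrictMonoAtGapTwo σ) (h : σ (Fin.last (n + 1)) ≠ Fin.last (n + 1)) :
    ∃ τ : Perm (Fin n), σ = τ.directSum (swap 0 1) := by
  have hlt (i : Fin n) : (σ (Fin.castAdd 2 i) : ℕ) < n := by
    have := hσ (Fin.castAdd 2 i) (Fin.last (n + 1)) (by simp)
    have := Fin.val_lt_last h
    omega
  obtain ⟨α, β, rfl⟩ := exists_eq_directSum σ hlt
  rcases (by decide : ∀ β : Perm (Fin 2), β = 1 ∨ β = swap 0 1) β with rfl | rfl
  · exact absurd (directSum_natAdd α 1 1) h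
  · exact ⟨α, rfl⟩

theorem card_strictMonoAtGapTwo_add_two (n : ℕ) :
    Nat.card {σ : Perm (Fin (n + 2)) // StrictMonoAtGapTwo σ} =
      Nat.card {τ : Perm (Fin (n + 1)) // StrictMonoAtGapTwo τ} +
        Nat.card {τ : Perm (Fin n) // StrictMonoAtGapTwo τ} := by
  have hone : StrictMonoAtGapTwo (1 : Perm (Fin 1)) := strictMonoAtGapTwo_of_le_two _ (by omega)
  have hswap : StrictMonoAtGapTwo (swap 0 1 : Perm (Fin 2)) :=
    strictMonoAtGapTwo_of_le_two _ le_rfl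
  let layer : {τ : Perm (Fin (n + 1)) // StrictMonoAtGapTwo τ} ⊕
      {τ : Perm (Fin n) // StrictMonoAtGapTwo τ} →
        {σ : Perm (Fin (n + 2)) // StrictMonoAtGapTwo σ} :=
    Sum.elim (fun τ ↦ ⟨τ.1.directSum (1 : Perm (Fin 1)),
        strictMonoAtGapTwo_directSum_iff.2 ⟨τ.2, hone⟩⟩)
      (fun τ ↦ ⟨τ.1.directSum (swap 0 1 : Perm (Fin 2)),
        strictMonoAtGapTwo_directSum_iff.2 ⟨τ.2, hswap⟩⟩)
  have hlayer : Function.Bijective layer := by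
    refine ⟨?_, ?_⟩
    · rintro (⟨τ, hτ⟩ | ⟨τ, hτ⟩) (⟨τ', hτ'⟩ | ⟨τ', hτ'⟩) h <;>
        simp only [layer, Sum.elim_inl, Sum.elim_inr, Subtype.mk.injEq] at h
      case inl.inl | inr.inr => obtain rfl := directSum_left_injective _ h; rfl
      all_goals
        have := congr(Fin.val ($h (Fin.last (n + 1))))
        simp only [directSum_one_apply_last, directSum_swap_apply_last, Fin.val_last] at this
        omega
    · rintro ⟨σ, hσ⟩
      by_cases h : σ (Fin.last (n + 1)) = Fin.last (n + 1)
      · obtain ⟨τ, rfl⟩ := exists_eq_directSum_one σ h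
        exact ⟨.inl ⟨τ, (strictMonoAtGapTwo_directSum_iff.1 hσ).1⟩, rfl⟩
      · obtain ⟨τ, rfl⟩ := hσ.exists_eq_directSum_swap h
        exact ⟨.inr ⟨τ, (strictMonoAtGapTwo_directSum_iff.1 hσ).1⟩, rfl⟩
  rw [← Nat.card_sum, Nat.card_congr (Equiv.ofBijective layer hlayer)]

theorem card_strictMonoAtGapTwo : ∀ n : ℕ,
    Nat.card {σ : Perm (Fin n) // StrictMonoAtGapTwo σ} = Nat.fib (n + 1)
  | 0 | 1 => by
    rw [Nat.card_congr (subtypeUnivEquiv fun σ ↦ strictMonoAtGapTwo_of_le_two σ (by omega))]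
    simp
  | n + 2 => by
    rw [card_strictMonoAtGapTwo_add_two, card_strictMonoAtGapTwo (n + 1),
      card_strictMonoAtGapTwo n, Nat.fib_add_two (n := n + 1), add_comm]

end Equiv.Perm

section Patterns

variable {n : ℕ}

lemma not_avoidsPat_of_triple {π : Perm (Fin n)} {i j k : Fin n} (hij : i < j) (hjk : j < k)
    {a b c : ℕ} (h : ∀ x y : Fin 3,
      [a, b, c].get x < [a, b, c].get y ↔ π (![i, j, k] x) < π (![i, j, k] y)) :
    ¬ AvoidsPat π [a, b, c] := by
  refine not_not_intro ⟨OrderEmbedding.ofStrictMono ![i, j, k] ?_, fun x y ↦ ?_⟩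
  · exact Fin.strictMono_iff_lt_succ.2 fun x ↦ by fin_cases x <;> assumption
  · exact h x y

lemma avoidsPat_of_forall_gap_two {π : Perm (Fin n)}
    (h : ∀ i k : Fin n, i.val + 2 ≤ k.val → π k < π i) {a b c : ℕ} (hac : a < c) :
    AvoidsPat π [a, b, c] := by
  rintro ⟨f, hf⟩
  have h01 := f.strictMono (show (⟨0, by simp⟩ : Fin 3) < ⟨1, by simp⟩ by decide)
  have h12 := f.strictMono (show (⟨1, by simp⟩ : Fin 3) < ⟨2, by simp⟩ by decide)
  exact (h _ _ (by omega)).asymm ((hf ⟨0, by simp⟩ ⟨2, by simp⟩).1 hac)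

theorem avoids_123_132_213_iff (π : Perm (Fin n)) :
    (∀ s ∈ [[1, 2, 3], [1, 3, 2], [2, 1, 3]], AvoidsPat π s) ↔
      Perm.StrictMonoAtGapTwo (Fin.revPerm * π) := by
  simp only [Perm.StrictMonoAtGapTwo, Perm.mul_apply, Fin.revPerm_apply, Fin.rev_lt_rev,
    List.forall_mem_cons, List.not_mem_nil, IsEmpty.forall_iff, implies_true, and_true]
  refine ⟨fun ⟨h123, h132, h213⟩ i k hik ↦ ?_, fun h ↦
    ⟨avoidsPat_of_forall_gap_two h (by decide), avoidsPat_of_forall_gap_two h (by decide),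
      avoidsPat_of_forall_gap_two h (by decide)⟩⟩
  by_contra hki
  have hik' : π i < π k := lt_of_le_of_ne (not_lt.1 hki) (π.injective.ne (by omega))
  let j : Fin n := ⟨i + 1, by omega⟩
  have hij : i < j := Fin.lt_def.2 (Nat.lt_succ_self _)
  have hjk : j < k := Fin.lt_def.2 (show i.val + 1 < k.val by omega)
  have hji : π j ≠ π i := π.injective.ne hij.ne'
  have hjk' : π j ≠ π k := π.injective.ne hjk.ne
  -- the middle value decides which of the three patterns sits at positions `i < j < k`
  rcases hji.lt_or_gt with hji | hji
  · exact not_avoidsPat_of_triple hij hjk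
      (by intro x y; fin_cases x <;> fin_cases y <;> simp <;> omega) h213
  rcases hjk'.lt_or_gt with hjk' | hjk'
  · exact not_avoidsPat_of_triple hij hjk
      (by intro x y; fin_cases x <;> fin_cases y <;> simp <;> omega) h123
  · exact not_avoidsPat_of_triple hij hjk
      (by intro x y; fin_cases x <;> fin_cases y <;> simp <;> omega) h132

end Patterns

theorem avoid_123_132_213_eq_fib_general (n : ℕ) :
    AvoidCount [[1, 2, 3], [1, 3, 2], [2, 1, 3]] n = Nat.fib (n + 1) := by
  rw [AvoidCount, ← Perm.card_strictMonoAtGapTwo]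
  exact Nat.card_congr ((Equiv.mulLeft Fin.revPerm).subtypeEquiv avoids_123_132_213_iff)

theorem avoid_123_132_213_eq_fib (n : ℕ) (hn : 1 ≤ n) :
    AvoidCount [[1, 2, 3], [1, 3, 2], [2, 1, 3]] n = Nat.fib (n + 1) :=
  avoid_123_132_213_eq_fib_general n
end

section
/- For all n ≥ 1, the number of permutations of [n] avoiding the patterns 1234, 132, and 213 equals the Tribonacci number T_{n+1}. -/
/-- The Tribonacci numbers: `T_0 = 0`, `T_1 = T_2 = 1`,
`T_n = T_{n-1} + T_{n-2} + T_{n-3}` for `n ≥ 3`. -/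
def trib : ℕ → ℕ
  | 0 => 0
  | 1 => 1
  | 2 => 1
  | n + 3 => trib (n + 2) + trib (n + 1) + trib n

/-! ### Auxiliary development -/

set_option maxHeartbeats 1000000

section Aux

open Equiv

private lemma smono3 {n : ℕ} {i j k : Fin n} (hij : i < j) (hjk : j < k) :
    StrictMono ![i,j,k] := by
  intro a b hab
  fin_cases a <;> fin_cases b <;> simp_all <;>
    first | exact hij | exact hjk | exact hij.trans hjk

private lemma smono4 {n : ℕ} {i j k l : Fin n} (hij : i < j) (hjk : j < k) (hkl : k < l) :
    StrictMono ![i,j,k,l] := by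
  intro a b hab
  fin_cases a <;> fin_cases b <;> simp_all <;>
    first
    | exact hij
    | exact hjk
    | exact hkl
    | exact hij.trans hjk
    | exact hjk.trans hkl
    | exact (hij.trans hjk).trans hkl

lemma avoid132_iff {n} (π : Equiv.Perm (Fin n)) :
    AvoidsPat π [1,3,2] ↔ ∀ i j k : Fin n, i < j → j < k → ¬(π i < π k ∧ π k < π j) := by
  unfold AvoidsPat
  constructor
  · intro h i j k hij hjk ⟨h1, h2⟩
    have h3 : π i < π j := h1.trans h2
    refine h ⟨OrderEmbedding.ofStrictMono ![i,j,k] (smono3 hij hjk), fun a b => ?_⟩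
    fin_cases a <;> fin_cases b <;>
      first
        | exact iff_of_false (by decide) (lt_irrefl _)
        | exact iff_of_true (by decide) h3
        | exact iff_of_true (by decide) h1
        | exact iff_of_true (by decide) h2
        | exact iff_of_false (by decide) (asymm h3)
        | exact iff_of_false (by decide) (asymm h1)
        | exact iff_of_false (by decide) (asymm h2)
  · intro h ⟨f, hf⟩
    have hf' : ∀ a b : Fin 3, [1,3,2].get a < [1,3,2].get b ↔ π (f a) < π (f b) := hf
    have m01 : f (0:Fin 3) < f (1:Fin 3) := f.strictMono (by decide : (0:Fin 3) < (1:Fin 3))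
    have m12 : f (1:Fin 3) < f (2:Fin 3) := f.strictMono (by decide : (1:Fin 3) < (2:Fin 3))
    have h1 : π (f (0:Fin 3)) < π (f (2:Fin 3)) := (hf' 0 2).mp (by decide)
    have h2 : π (f (2:Fin 3)) < π (f (1:Fin 3)) := (hf' 2 1).mp (by decide)
    exact h _ _ _ m01 m12 ⟨h1, h2⟩

lemma avoid213_iff {n} (π : Equiv.Perm (Fin n)) :
    AvoidsPat π [2,1,3] ↔ ∀ i j k : Fin n, i < j → j < k → ¬(π j < π i ∧ π i < π k) := by
  unfold AvoidsPat
  constructor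
  · intro h i j k hij hjk ⟨h1, h2⟩
    have h3 : π j < π k := h1.trans h2
    refine h ⟨OrderEmbedding.ofStrictMono ![i,j,k] (smono3 hij hjk), fun a b => ?_⟩
    fin_cases a <;> fin_cases b <;>
      first
        | exact iff_of_false (by decide) (lt_irrefl _)
        | exact iff_of_true (by decide) h3
        | exact iff_of_true (by decide) h1
        | exact iff_of_true (by decide) h2
        | exact iff_of_false (by decide) (asymm h3)
        | exact iff_of_false (by decide) (asymm h1)
        | exact iff_of_false (by decide) (asymm h2)
  · intro h ⟨f, hf⟩
    have hf' : ∀ a b : Fin 3, [2,1,3].get a < [2,1,3].get b ↔ π (f a) < π (f b) := hf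
    have m01 : f (0:Fin 3) < f (1:Fin 3) := f.strictMono (by decide : (0:Fin 3) < (1:Fin 3))
    have m12 : f (1:Fin 3) < f (2:Fin 3) := f.strictMono (by decide : (1:Fin 3) < (2:Fin 3))
    have h1 : π (f (1:Fin 3)) < π (f (0:Fin 3)) := (hf' 1 0).mp (by decide)
    have h2 : π (f (0:Fin 3)) < π (f (2:Fin 3)) := (hf' 0 2).mp (by decide)
    exact h _ _ _ m01 m12 ⟨h1, h2⟩

lemma avoid1234_iff {n} (π : Equiv.Perm (Fin n)) :
    AvoidsPat π [1,2,3,4] ↔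
      ∀ i j k l : Fin n, i < j → j < k → k < l →
        ¬(π i < π j ∧ π j < π k ∧ π k < π l) := by
  unfold AvoidsPat
  constructor
  · intro h i j k l hij hjk hkl ⟨h1, h2, h3⟩
    have h4 : π i < π k := h1.trans h2
    have h5 : π j < π l := h2.trans h3
    have h6 : π i < π l := h1.trans h5
    refine h ⟨OrderEmbedding.ofStrictMono ![i,j,k,l] (smono4 hij hjk hkl), fun a b => ?_⟩
    fin_cases a <;> fin_cases b <;>
      first
        | exact iff_of_false (by decide) (lt_irrefl _)
        | exact iff_of_true (by decide) h1
        | exact iff_of_true (by decide) h2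
        | exact iff_of_true (by decide) h3
        | exact iff_of_true (by decide) h4
        | exact iff_of_true (by decide) h5
        | exact iff_of_true (by decide) h6
        | exact iff_of_false (by decide) (asymm h1)
        | exact iff_of_false (by decide) (asymm h2)
        | exact iff_of_false (by decide) (asymm h3)
        | exact iff_of_false (by decide) (asymm h4)
        | exact iff_of_false (by decide) (asymm h5)
        | exact iff_of_false (by decide) (asymm h6)
  · intro h ⟨f, hf⟩
    have hf' : ∀ a b : Fin 4, [1,2,3,4].get a < [1,2,3,4].get b ↔ π (f a) < π (f b) := hf
    have m01 : f (0:Fin 4) < f (1:Fin 4) := f.strictMono (by decide : (0:Fin 4) < (1:Fin 4))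
    have m12 : f (1:Fin 4) < f (2:Fin 4) := f.strictMono (by decide : (1:Fin 4) < (2:Fin 4))
    have m23 : f (2:Fin 4) < f (3:Fin 4) := f.strictMono (by decide : (2:Fin 4) < (3:Fin 4))
    have h1 : π (f (0:Fin 4)) < π (f (1:Fin 4)) := (hf' 0 1).mp (by decide)
    have h2 : π (f (1:Fin 4)) < π (f (2:Fin 4)) := (hf' 1 2).mp (by decide)
    have h3 : π (f (2:Fin 4)) < π (f (3:Fin 4)) := (hf' 2 3).mp (by decide)
    exact h _ _ _ _ m01 m12 m23 ⟨h1, h2, h3⟩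

/-- The key structural property: ascents jump by exactly the position difference. -/
abbrev Pprop {n : ℕ} (π : Equiv.Perm (Fin n)) : Prop :=
  ∀ i j : Fin n, (i:ℕ) < j → π i < π j → (π j : ℕ) = π i + ((j:ℕ) - i)

/-- No increasing subsequence of length 4. -/
abbrev Qprop {n : ℕ} (π : Equiv.Perm (Fin n)) : Prop :=
  ∀ i j k l : Fin n, i < j → j < k → k < l →
    ¬(π i < π j ∧ π j < π k ∧ π k < π l)

lemma Pprop.interval {n : ℕ} {π : Equiv.Perm (Fin n)} (hP : Pprop π)
    {i j : Fin n} (hij : (i:ℕ) < j) (hv : π i < π j) (m : Fin n)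
    (h1 : (i:ℕ) ≤ m) (h2 : (m:ℕ) ≤ j) : (π m : ℕ) = π i + ((m:ℕ) - i) := by
  rcases eq_or_lt_of_le h1 with h | h1'
  · have : i = m := Fin.ext h
    subst this; simp
  rcases eq_or_lt_of_le h2 with h | h2'
  · have : m = j := Fin.ext h
    subst this; exact hP i m hij hv
  rcases lt_trichotomy (π i) (π m) with hc | hc | hc
  · exact hP i m h1' hc
  · exfalso
    have : i = m := π.injective hc
    subst this
    omega
  · exfalso
    have hmj : π m < π j := hc.trans hv
    have e1 : (π j : ℕ) = π m + ((j:ℕ) - m) := hP m j h2' hmj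
    have e2 : (π j : ℕ) = π i + ((j:ℕ) - i) := hP i j hij hv
    have hc' : (π m : ℕ) < π i := hc
    omega

lemma P_of_avoid {n : ℕ} (π : Equiv.Perm (Fin n))
    (h132 : ∀ i j k : Fin n, i < j → j < k → ¬(π i < π k ∧ π k < π j))
    (h213 : ∀ i j k : Fin n, i < j → j < k → ¬(π j < π i ∧ π i < π k)) :
    Pprop π := by
  intro i j hij hv
  have hij' : i < j := hij
  have key : (Finset.Icc i j).image π = Finset.Icc (π i) (π j) := by
    ext v
    simp only [Finset.mem_image, Finset.mem_Icc]
    constructor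
    · rintro ⟨m, ⟨hm1, hm2⟩, rfl⟩
      rcases eq_or_lt_of_le hm1 with h | h1
      · subst h; exact ⟨le_refl _, le_of_lt hv⟩
      rcases eq_or_lt_of_le hm2 with h | h2
      · subst h; exact ⟨le_of_lt hv, le_refl _⟩
      constructor
      · by_contra hcon
        push_neg at hcon
        exact h213 i m j h1 h2 ⟨hcon, hv⟩
      · by_contra hcon
        push_neg at hcon
        exact h132 i m j h1 h2 ⟨hv, hcon⟩
    · rintro ⟨hv1, hv2⟩
      refine ⟨π.symm v, ?_, π.apply_symm_apply v⟩
      set m := π.symm v with hm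
      have hmv : π m = v := π.apply_symm_apply v
      rw [← hmv] at hv1 hv2
      constructor
      · by_contra hcon
        push_neg at hcon
        have hs1 : π i < π m := by
          rcases eq_or_lt_of_le hv1 with h | h
          · exact absurd (π.injective h) (fun he => absurd (he ▸ hcon) (lt_irrefl _))
          · exact h
        have hs2 : π m < π j := by
          rcases eq_or_lt_of_le hv2 with h | h
          · have := π.injective h
            subst this
            exact absurd (hcon.trans hij') (lt_irrefl _)
          · exact h
        exact h213 m i j hcon hij' ⟨hs1, hs2⟩
      · by_contra hcon
        push_neg at hcon
        have hs1 : π i < π m := by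
          rcases eq_or_lt_of_le hv1 with h | h
          · have := π.injective h
            subst this
            exact absurd (hij'.trans hcon) (lt_irrefl _)
          · exact h
        have hs2 : π m < π j := by
          rcases eq_or_lt_of_le hv2 with h | h
          · exact absurd (π.injective h) (fun he => absurd (he ▸ hcon) (lt_irrefl _))
          · exact h
        exact h132 i j m hij' hcon ⟨hs1, hs2⟩
  have hcard : ((Finset.Icc i j).image π).card = (Finset.Icc i j).card :=
    Finset.card_image_of_injective _ π.injective
  rw [key, Fin.card_Icc, Fin.card_Icc] at hcard
  have hv' : (π i : ℕ) < π j := hv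
  omega

lemma avoid_of_P {n : ℕ} (π : Equiv.Perm (Fin n)) (hP : Pprop π) :
    (∀ i j k : Fin n, i < j → j < k → ¬(π i < π k ∧ π k < π j)) ∧
    (∀ i j k : Fin n, i < j → j < k → ¬(π j < π i ∧ π i < π k)) := by
  constructor
  · rintro i j k hij hjk ⟨h1, h2⟩
    have hik : (i:ℕ) < k := lt_trans hij hjk
    have e1 : (π k : ℕ) = π i + ((k:ℕ) - i) := hP i k hik h1
    have e2 : (π j : ℕ) = π i + ((j:ℕ) - i) := hP i j hij (h1.trans h2)
    have h2' : (π k : ℕ) < π j := h2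
    have hij' : (i:ℕ) < j := hij
    have hjk' : (j:ℕ) < k := hjk
    omega
  · rintro i j k hij hjk ⟨h1, h2⟩
    have hik : (i:ℕ) < k := lt_trans hij hjk
    have e1 : (π k : ℕ) = π i + ((k:ℕ) - i) := hP i k hik h2
    have e2 : (π k : ℕ) = π j + ((k:ℕ) - j) := hP j k hjk (h1.trans h2)
    have h1' : (π j : ℕ) < π i := h1
    have hij' : (i:ℕ) < j := hij
    have hjk' : (j:ℕ) < k := hjk
    omega

lemma avoid_iff_PQ {n : ℕ} (π : Equiv.Perm (Fin n)) :
    (∀ s ∈ [[1, 2, 3, 4], [1, 3, 2], [2, 1, 3]], AvoidsPat π s) ↔ (Pprop π ∧ Qprop π) := by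
  have hexp : (∀ s ∈ [[1, 2, 3, 4], [1, 3, 2], [2, 1, 3]], AvoidsPat π s) ↔
      (AvoidsPat π [1,2,3,4] ∧ AvoidsPat π [1,3,2] ∧ AvoidsPat π [2,1,3]) := by
    simp [List.forall_mem_cons]
  rw [hexp, avoid1234_iff, avoid132_iff, avoid213_iff]
  constructor
  · rintro ⟨h1, h2, h3⟩
    exact ⟨P_of_avoid π h2 h3, h1⟩
  · rintro ⟨hP, hQ⟩
    exact ⟨hQ, (avoid_of_P π hP).1, (avoid_of_P π hP).2⟩

/-! ### Extension and stripping of the initial block -/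

def extF (m b : ℕ) (π : Equiv.Perm (Fin m)) : Fin (m + b) → Fin (m + b) :=
  fun i => if h : (i : ℕ) < b then ⟨m + i, by omega⟩
    else ⟨π ⟨(i : ℕ) - b, by omega⟩, by
      exact lt_of_lt_of_le (Fin.is_lt _) (Nat.le_add_right m b)⟩

lemma extF_inj (m b : ℕ) (π : Equiv.Perm (Fin m)) : Function.Injective (extF m b π) := by
  intro x y h
  unfold extF at h
  by_cases hx : (x:ℕ) < b <;> by_cases hy : (y:ℕ) < b <;> simp [hx, hy] at h
  · exact Fin.ext (by omega)
  · exact absurd h (by have := (π ⟨(y:ℕ)-b, by omega⟩).isLt; omega)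
  · exact absurd h (by have := (π ⟨(x:ℕ)-b, by omega⟩).isLt; omega)
  · have := π.injective (Fin.ext h : π ⟨(x:ℕ)-b, by omega⟩ = π ⟨(y:ℕ)-b, by omega⟩)
    have := congrArg Fin.val this
    simp at this
    exact Fin.ext (by omega)

noncomputable def extPerm (m b : ℕ) (π : Equiv.Perm (Fin m)) : Equiv.Perm (Fin (m + b)) :=
  Equiv.ofBijective _ (Finite.injective_iff_bijective.mp (extF_inj m b π))

lemma extPerm_lt (m b : ℕ) (π : Equiv.Perm (Fin m)) (i : Fin (m+b)) (h : (i:ℕ) < b) :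
    (extPerm m b π i : ℕ) = m + i := by simp [extPerm, extF, h]

lemma extPerm_ge (m b : ℕ) (π : Equiv.Perm (Fin m)) (i : Fin (m+b)) (h : ¬ (i:ℕ) < b) :
    (extPerm m b π i : ℕ) = π ⟨(i:ℕ) - b, by omega⟩ := by simp [extPerm, extF, h]

lemma extPerm_P (m b : ℕ) (π : Equiv.Perm (Fin m)) (hP : Pprop π) : Pprop (extPerm m b π) := by
  intro i j hij hv
  have hv' : (extPerm m b π i : ℕ) < extPerm m b π j := hv
  by_cases hi : (i:ℕ) < b <;> by_cases hj : (j:ℕ) < b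
  · rw [extPerm_lt m b π i hi, extPerm_lt m b π j hj] at *
    omega
  · rw [extPerm_lt m b π i hi, extPerm_ge m b π j hj] at hv' ⊢
    have := (π ⟨(j:ℕ) - b, by omega⟩).isLt
    omega
  · omega
  · rw [extPerm_ge m b π i hi, extPerm_ge m b π j hj] at hv' ⊢
    have := hP ⟨(i:ℕ) - b, by omega⟩ ⟨(j:ℕ) - b, by omega⟩ (by simp; omega) (by
      rw [Fin.lt_def]; exact hv')
    simp at this ⊢
    omega

lemma extPerm_Q (m b : ℕ) (hb : b ≤ 3) (π : Equiv.Perm (Fin m)) (hQ : Qprop π) :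
    Qprop (extPerm m b π) := by
  rintro i j k l hij hjk hkl ⟨a1, a2, a3⟩
  have hij' : (i:ℕ) < j := hij
  have hjk' : (j:ℕ) < k := hjk
  have hkl' : (k:ℕ) < l := hkl
  have hl : ¬ (l:ℕ) < b := by omega
  have hk : ¬ (k:ℕ) < b := by
    intro hk
    have h1 := extPerm_lt m b π k hk
    have h2 := extPerm_ge m b π l hl
    have := (π ⟨(l:ℕ) - b, by omega⟩).isLt
    have a3' : (extPerm m b π k : ℕ) < extPerm m b π l := a3
    omega
  have hj : ¬ (j:ℕ) < b := by
    intro hj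
    have h1 := extPerm_lt m b π j hj
    have h2 := extPerm_ge m b π k hk
    have := (π ⟨(k:ℕ) - b, by omega⟩).isLt
    have a2' : (extPerm m b π j : ℕ) < extPerm m b π k := a2
    omega
  have hi : ¬ (i:ℕ) < b := by
    intro hi
    have h1 := extPerm_lt m b π i hi
    have h2 := extPerm_ge m b π j hj
    have := (π ⟨(j:ℕ) - b, by omega⟩).isLt
    have a1' : (extPerm m b π i : ℕ) < extPerm m b π j := a1
    omega
  refine hQ ⟨(i:ℕ)-b, by omega⟩ ⟨(j:ℕ)-b, by omega⟩ ⟨(k:ℕ)-b, by omega⟩ ⟨(l:ℕ)-b, by omega⟩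
    (by simp [Fin.lt_def]; omega) (by simp [Fin.lt_def]; omega) (by simp [Fin.lt_def]; omega)
    ⟨?_, ?_, ?_⟩
  · rw [Fin.lt_def]
    have e1 := extPerm_ge m b π i hi
    have e2 := extPerm_ge m b π j hj
    have a1' : (extPerm m b π i : ℕ) < extPerm m b π j := a1
    omega
  · rw [Fin.lt_def]
    have e1 := extPerm_ge m b π j hj
    have e2 := extPerm_ge m b π k hk
    have a2' : (extPerm m b π j : ℕ) < extPerm m b π k := a2
    omega
  · rw [Fin.lt_def]
    have e1 := extPerm_ge m b π k hk
    have e2 := extPerm_ge m b π l hl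
    have a3' : (extPerm m b π k : ℕ) < extPerm m b π l := a3
    omega

lemma extPerm_injective (m b : ℕ) : Function.Injective (extPerm m b) := by
  intro π π' h
  apply Equiv.ext
  intro x
  apply Fin.ext
  have h1 := extPerm_ge m b π ⟨b + (x:ℕ), by omega⟩ (by show ¬ b + (x:ℕ) < b; omega)
  have h2 := extPerm_ge m b π' ⟨b + (x:ℕ), by omega⟩ (by show ¬ b + (x:ℕ) < b; omega)
  rw [h] at h1
  have e : (⟨b + (x:ℕ) - b, by omega⟩ : Fin m) = x := Fin.ext (by simp)
  rw [e] at h1 h2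
  rw [h1] at h2
  exact h2

def stripF (m b : ℕ) (σ : Equiv.Perm (Fin (m+b)))
    (hσ : ∀ x : Fin m, (σ ⟨b + (x:ℕ), by omega⟩ : ℕ) < m) : Fin m → Fin m :=
  fun x => ⟨(σ ⟨b + (x:ℕ), by omega⟩ : ℕ), hσ x⟩

lemma strip (m b : ℕ) (hb : 1 ≤ b) (hm : 0 < m) (σ : Equiv.Perm (Fin (m+b)))
    (hP : Pprop σ) (hQ : Qprop σ)
    (hasc : ∀ t : ℕ, (ht : t + 1 < b) → (σ ⟨t, by omega⟩ : ℕ) < σ ⟨t+1, by omega⟩)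
    (hdesc : ¬ ((σ ⟨b-1, by omega⟩ : ℕ) < σ ⟨b, by omega⟩)) :
    ∃ π : Equiv.Perm (Fin m), Pprop π ∧ Qprop π ∧ extPerm m b π = σ := by
  have run : ∀ t : ℕ, (ht : t < b) → (σ ⟨t, by omega⟩ : ℕ) = σ ⟨0, by omega⟩ + t := by
    intro t
    induction t with
    | zero => intro _; simp
    | succ t ih =>
      intro h
      have e := ih (by omega)
      have a := hasc t (by omega)
      have := hP ⟨t, by omega⟩ ⟨t+1, by omega⟩ (by simp) (by rw [Fin.lt_def]; exact a)
      simp at this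
      omega
  have tail1 : ∀ j : Fin (m+b), b ≤ (j:ℕ) → (σ j : ℕ) < σ ⟨b-1, by omega⟩ := by
    intro j hj
    rcases lt_trichotomy ((σ j : ℕ)) ((σ ⟨b-1, by omega⟩ : ℕ)) with h|h|h
    · exact h
    · exfalso
      have : j = ⟨b-1, by omega⟩ := σ.injective (Fin.ext h)
      have := congrArg Fin.val this
      simp at this
      omega
    · exfalso
      have hbj : (b:ℕ) - 1 < (j:ℕ) := by omega
      have hiv : σ ⟨b-1, by omega⟩ < σ j := h
      have := hP.interval hbj hiv ⟨b, by omega⟩ (by show b - 1 ≤ b; omega)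
        (by show b ≤ (j:ℕ); omega)
      simp at this
      omega
  have top : (σ ⟨0, by omega⟩ : ℕ) = m := by
    have hb1 := run (b-1) (by omega)
    have upper := (σ ⟨b-1, by omega⟩).isLt
    obtain ⟨p, hp⟩ := σ.surjective ⟨m+b-1, by omega⟩
    have hpv : (σ p : ℕ) = m + b - 1 := by rw [hp]
    by_cases hpb : (p:ℕ) < b
    · have hv : (σ p : ℕ) = σ ⟨0, by omega⟩ + p := run p hpb
      omega
    · have := tail1 p (by omega)
      omega
  have tailm : ∀ j : Fin (m+b), b ≤ (j:ℕ) → (σ j : ℕ) < m := by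
    intro j hj
    by_contra hcon
    push_neg at hcon
    have h1 := tail1 j hj
    have hb1 := run (b-1) (by omega)
    obtain ⟨t, ht⟩ : ∃ t, t = (σ j : ℕ) - m := ⟨_, rfl⟩
    have htb : t < b := by omega
    have := run t htb
    have : σ ⟨t, by omega⟩ = σ j := Fin.ext (by omega)
    have := σ.injective this
    have := congrArg Fin.val this
    simp at this
    omega
  have hgmem : ∀ x : Fin m, (σ ⟨b + (x:ℕ), by omega⟩ : ℕ) < m := fun x =>
    tailm ⟨b + (x:ℕ), by omega⟩ (by simp)
  have ginj : Function.Injective (stripF m b σ hgmem) := by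
    intro x y h
    have h0 : (stripF m b σ hgmem x : ℕ) = (stripF m b σ hgmem y : ℕ) := congrArg Fin.val h
    have h1 : ((σ ⟨b + (x:ℕ), by omega⟩ : Fin (m+b)) : ℕ) = σ ⟨b + (y:ℕ), by omega⟩ := h0
    have h2 : (σ ⟨b + (x:ℕ), by omega⟩ : Fin (m+b)) = σ ⟨b + (y:ℕ), by omega⟩ := Fin.ext h1
    have h3 := congrArg Fin.val (σ.injective h2)
    simp at h3
    exact Fin.ext h3
  refine ⟨Equiv.ofBijective _ (Finite.injective_iff_bijective.mp ginj), ?_, ?_, ?_⟩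
  · intro x y hxy hv
    have hv' : (σ ⟨b + (x:ℕ), by omega⟩ : ℕ) < σ ⟨b + (y:ℕ), by omega⟩ := hv
    have := hP ⟨b + (x:ℕ), by omega⟩ ⟨b + (y:ℕ), by omega⟩ (by simp; omega)
      (by rw [Fin.lt_def]; exact hv')
    simp at this
    have e1 : ((Equiv.ofBijective _ (Finite.injective_iff_bijective.mp ginj)) x : ℕ)
        = σ ⟨b + (x:ℕ), by omega⟩ := rfl
    have e2 : ((Equiv.ofBijective _ (Finite.injective_iff_bijective.mp ginj)) y : ℕ)
        = σ ⟨b + (y:ℕ), by omega⟩ := rfl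
    omega
  · rintro i j k l hij hjk hkl ⟨a1, a2, a3⟩
    have hij' : (i:ℕ) < j := hij
    have hjk' : (j:ℕ) < k := hjk
    have hkl' : (k:ℕ) < l := hkl
    refine hQ ⟨b + (i:ℕ), by omega⟩ ⟨b + (j:ℕ), by omega⟩ ⟨b + (k:ℕ), by omega⟩
      ⟨b + (l:ℕ), by omega⟩ (by rw [Fin.lt_def]; simp; omega) (by rw [Fin.lt_def]; simp; omega)
      (by rw [Fin.lt_def]; simp; omega) ⟨?_, ?_, ?_⟩
    · exact a1
    · exact a2
    · exact a3
  · apply Equiv.ext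
    intro i
    apply Fin.ext
    by_cases hi : (i:ℕ) < b
    · rw [extPerm_lt _ _ _ i hi]
      have h2 : (σ i : ℕ) = σ ⟨0, by omega⟩ + i := run i hi
      omega
    · rw [extPerm_ge _ _ _ i hi]
      have e : (⟨b + ((i:ℕ) - b), by omega⟩ : Fin (m+b)) = i := Fin.ext (by simp; omega)
      have e2 : ((σ (⟨b + ((i:ℕ) - b), by omega⟩ : Fin (m+b))) : ℕ) = σ i :=
        congrArg (fun z => ((σ z : Fin (m+b)) : ℕ)) e
      rw [← e2]
      rfl


/-! ### The recurrence -/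

def V0 (t : ℕ) (σ : Equiv.Perm (Fin (t+4))) : ℕ := σ ⟨0, by omega⟩
def V1 (t : ℕ) (σ : Equiv.Perm (Fin (t+4))) : ℕ := σ ⟨1, by omega⟩
def V2 (t : ℕ) (σ : Equiv.Perm (Fin (t+4))) : ℕ := σ ⟨2, by omega⟩

lemma V0_ext1 (t : ℕ) (π : Equiv.Perm (Fin (t+3))) : V0 t (extPerm (t+3) 1 π) = t+3 :=
  extPerm_lt (t+3) 1 π ⟨0, by omega⟩ (by show (0:ℕ) < 1; omega)
lemma V0_ext2 (t : ℕ) (π : Equiv.Perm (Fin (t+2))) : V0 t (extPerm (t+2) 2 π) = t+2 :=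
  extPerm_lt (t+2) 2 π ⟨0, by omega⟩ (by show (0:ℕ) < 2; omega)
lemma V0_ext3 (t : ℕ) (π : Equiv.Perm (Fin (t+1))) : V0 t (extPerm (t+1) 3 π) = t+1 :=
  extPerm_lt (t+1) 3 π ⟨0, by omega⟩ (by show (0:ℕ) < 3; omega)

noncomputable def GG (t : ℕ) :
    ({π : Equiv.Perm (Fin (t+3)) // Pprop π ∧ Qprop π} ⊕
      {π : Equiv.Perm (Fin (t+2)) // Pprop π ∧ Qprop π} ⊕
      {π : Equiv.Perm (Fin (t+1)) // Pprop π ∧ Qprop π}) →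
    {π : Equiv.Perm (Fin (t+4)) // Pprop π ∧ Qprop π} :=
  fun x => match x with
  | Sum.inl a =>
      ⟨extPerm (t+3) 1 a.1, extPerm_P _ _ _ a.2.1, extPerm_Q _ _ (by omega) _ a.2.2⟩
  | Sum.inr (Sum.inl a) =>
      ⟨extPerm (t+2) 2 a.1, extPerm_P _ _ _ a.2.1, extPerm_Q _ _ (by omega) _ a.2.2⟩
  | Sum.inr (Sum.inr a) =>
      ⟨extPerm (t+1) 3 a.1, extPerm_P _ _ _ a.2.1, extPerm_Q _ _ (by omega) _ a.2.2⟩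

lemma GG_inj (t : ℕ) : Function.Injective (GG t) := by
  intro x y h
  match x, y with
  | Sum.inl a, Sum.inl b =>
    have hval : extPerm (t+3) 1 a.1 = extPerm (t+3) 1 b.1 := congrArg Subtype.val h
    have : a.1 = b.1 := extPerm_injective (t+3) 1 hval
    rw [Subtype.ext this]
  | Sum.inr (Sum.inl a), Sum.inr (Sum.inl b) =>
    have hval : extPerm (t+2) 2 a.1 = extPerm (t+2) 2 b.1 := congrArg Subtype.val h
    have : a.1 = b.1 := extPerm_injective (t+2) 2 hval
    rw [Subtype.ext this]
  | Sum.inr (Sum.inr a), Sum.inr (Sum.inr b) =>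
    have hval : extPerm (t+1) 3 a.1 = extPerm (t+1) 3 b.1 := congrArg Subtype.val h
    have : a.1 = b.1 := extPerm_injective (t+1) 3 hval
    rw [Subtype.ext this]
  | Sum.inl a, Sum.inr (Sum.inl b) =>
    exfalso
    have hv : V0 t (extPerm (t+3) 1 a.1) = V0 t (extPerm (t+2) 2 b.1) :=
      congrArg (fun z => V0 t z.val) h
    rw [V0_ext1, V0_ext2] at hv
    omega
  | Sum.inl a, Sum.inr (Sum.inr b) =>
    exfalso
    have hv : V0 t (extPerm (t+3) 1 a.1) = V0 t (extPerm (t+1) 3 b.1) :=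
      congrArg (fun z => V0 t z.val) h
    rw [V0_ext1, V0_ext3] at hv
    omega
  | Sum.inr (Sum.inl a), Sum.inl b =>
    exfalso
    have hv : V0 t (extPerm (t+2) 2 a.1) = V0 t (extPerm (t+3) 1 b.1) :=
      congrArg (fun z => V0 t z.val) h
    rw [V0_ext2, V0_ext1] at hv
    omega
  | Sum.inr (Sum.inl a), Sum.inr (Sum.inr b) =>
    exfalso
    have hv : V0 t (extPerm (t+2) 2 a.1) = V0 t (extPerm (t+1) 3 b.1) :=
      congrArg (fun z => V0 t z.val) h
    rw [V0_ext2, V0_ext3] at hv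
    omega
  | Sum.inr (Sum.inr a), Sum.inl b =>
    exfalso
    have hv : V0 t (extPerm (t+1) 3 a.1) = V0 t (extPerm (t+3) 1 b.1) :=
      congrArg (fun z => V0 t z.val) h
    rw [V0_ext3, V0_ext1] at hv
    omega
  | Sum.inr (Sum.inr a), Sum.inr (Sum.inl b) =>
    exfalso
    have hv : V0 t (extPerm (t+1) 3 a.1) = V0 t (extPerm (t+2) 2 b.1) :=
      congrArg (fun z => V0 t z.val) h
    rw [V0_ext3, V0_ext2] at hv
    omega

lemma GG_surj (t : ℕ) : Function.Surjective (GG t) := by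
  rintro ⟨σ, hP, hQ⟩
  by_cases h01 : (σ (⟨0, by omega⟩ : Fin (t+4)) : ℕ) < σ (⟨1, by omega⟩ : Fin (t+4))
  · by_cases h12 : (σ (⟨1, by omega⟩ : Fin (t+4)) : ℕ) < σ (⟨2, by omega⟩ : Fin (t+4))
    · -- initial run of length ≥ 3, so exactly 3
      have h23 : ¬ ((σ (⟨2, by omega⟩ : Fin (t+4)) : ℕ) < σ (⟨3, by omega⟩ : Fin (t+4))) := by
        intro h23
        exact hQ ⟨0, by omega⟩ ⟨1, by omega⟩ ⟨2, by omega⟩ ⟨3, by omega⟩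
          (by rw [Fin.mk_lt_mk]; omega) (by rw [Fin.mk_lt_mk]; omega)
          (by rw [Fin.mk_lt_mk]; omega)
          ⟨by rw [Fin.lt_def]; exact h01, by rw [Fin.lt_def]; exact h12,
            by rw [Fin.lt_def]; exact h23⟩
      obtain ⟨π, hP', hQ', heq⟩ := strip (t+1) 3 (by omega) (by omega) σ hP hQ
        (by
          intro t' ht'
          match t' with
          | 0 => exact h01
          | 1 => exact h12
          | (t''+2) => omega)
        h23
      exact ⟨Sum.inr (Sum.inr ⟨π, hP', hQ'⟩), Subtype.ext heq⟩
    · obtain ⟨π, hP', hQ', heq⟩ := strip (t+2) 2 (by omega) (by omega) σ hP hQ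
        (by
          intro t' ht'
          match t' with
          | 0 => exact h01
          | (t''+1) => omega)
        h12
      exact ⟨Sum.inr (Sum.inl ⟨π, hP', hQ'⟩), Subtype.ext heq⟩
  · obtain ⟨π, hP', hQ', heq⟩ := strip (t+3) 1 (by omega) (by omega) σ hP hQ
      (by intro t' ht'; omega)
      h01
    exact ⟨Sum.inl ⟨π, hP', hQ'⟩, Subtype.ext heq⟩

lemma card_rec (t : ℕ) :
    Nat.card {π : Equiv.Perm (Fin (t+4)) // Pprop π ∧ Qprop π} =
      Nat.card {π : Equiv.Perm (Fin (t+3)) // Pprop π ∧ Qprop π} +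
      Nat.card {π : Equiv.Perm (Fin (t+2)) // Pprop π ∧ Qprop π} +
      Nat.card {π : Equiv.Perm (Fin (t+1)) // Pprop π ∧ Qprop π} := by
  rw [← Nat.card_eq_of_bijective (GG t) ⟨GG_inj t, GG_surj t⟩, Nat.card_sum, Nat.card_sum]
  omega

lemma card_all (m : ℕ) :
    Nat.card {π : Equiv.Perm (Fin (m+1)) // Pprop π ∧ Qprop π} = trib (m+2) ∧
    Nat.card {π : Equiv.Perm (Fin (m+2)) // Pprop π ∧ Qprop π} = trib (m+3) ∧
    Nat.card {π : Equiv.Perm (Fin (m+3)) // Pprop π ∧ Qprop π} = trib (m+4) := by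
  induction m with
  | zero =>
    refine ⟨?_, ?_, ?_⟩
    · rw [Nat.card_eq_fintype_card]; decide
    · rw [Nat.card_eq_fintype_card]; decide
    · rw [Nat.card_eq_fintype_card]; decide
  | succ m ih =>
    obtain ⟨h1, h2, h3⟩ := ih
    refine ⟨h2, h3, ?_⟩
    show Nat.card {π : Equiv.Perm (Fin (m+4)) // Pprop π ∧ Qprop π} = trib (m+1+4)
    have htrib : trib (m+1+4) = trib (m+4) + trib (m+3) + trib (m+2) := rfl
    rw [card_rec m, h1, h2, h3, htrib]

end Aux

theorem avoid_1234_132_213_eq_trib (n : ℕ) (hn : 1 ≤ n) :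
    AvoidCount [[1, 2, 3, 4], [1, 3, 2], [2, 1, 3]] n = trib (n + 1) := by
  unfold AvoidCount
  rw [Nat.card_congr (Equiv.subtypeEquivRight (fun π => avoid_iff_PQ π))]
  match n, hn with
  | (m+1), _ => exact (card_all m).1
end

section
/- For all k ≥ 2 and all n ≥ 0, the number of permutations of [n] avoiding the patterns 12…k, 132, and 213 equals the (k−1)-generalized Fibonacci number F_{k-1,n+1}. -/
namespace AvoidAux
open Finset Equiv

def f3 {n : ℕ} (p0 p1 p2 : Fin n) : Fin 3 → Fin n :=
  fun i => if (i : ℕ) = 0 then p0 else if (i : ℕ) = 1 then p1 else p2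

def emb3 {n : ℕ} (p0 p1 p2 : Fin n) (h01 : p0 < p1) (h12 : p1 < p2) : Fin 3 ↪o Fin n :=
  OrderEmbedding.ofStrictMono (f3 p0 p1 p2) (by
    have h02 := h01.trans h12
    intro i j hij
    have hij' : (i : ℕ) < (j : ℕ) := hij
    have hj3 : (j : ℕ) < 3 := j.isLt
    unfold f3
    rcases Nat.lt_or_ge (j : ℕ) 2 with hj | hj
    · have hj1 : (j : ℕ) = 1 := by omega
      have hi0 : (i : ℕ) = 0 := by omega
      rw [if_pos hi0, hj1]; simpa using h01
    · have hj2 : (j : ℕ) = 2 := by omega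
      rw [hj2]
      rcases Nat.eq_zero_or_pos (i : ℕ) with hi | hi
      · rw [if_pos hi]; simpa using h02
      · have hi1 : (i : ℕ) = 1 := by omega
        rw [hi1]; simpa using h12)

lemma avoids132_iff {n : ℕ} (π : Equiv.Perm (Fin n)) :
    AvoidsPat π [1,3,2] ↔
      ¬ ∃ p0 p1 p2 : Fin n, p0 < p1 ∧ p1 < p2 ∧ π p0 < π p2 ∧ π p2 < π p1 := by
  unfold AvoidsPat
  constructor
  · rintro h ⟨p0, p1, p2, h01, h12, hv02, hv21⟩
    refine h ⟨emb3 p0 p1 p2 h01 h12, ?_⟩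
    have hv01 : π p0 < π p1 := hv02.trans hv21
    intro i j
    obtain ⟨i, hi⟩ := i; obtain ⟨j, hj⟩ := j
    have hi' : i < 3 := by simpa using hi
    have hj' : j < 3 := by simpa using hj
    interval_cases i <;> interval_cases j
    · exact iff_of_false (lt_irrefl _) (lt_irrefl _)
    · exact iff_of_true (show (1:ℕ) < 3 by norm_num) hv01
    · exact iff_of_true (show (1:ℕ) < 2 by norm_num) hv02
    · exact iff_of_false (show ¬ (3:ℕ) < 1 by norm_num) (asymm hv01)
    · exact iff_of_false (lt_irrefl _) (lt_irrefl _)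
    · exact iff_of_false (show ¬ (3:ℕ) < 2 by norm_num) (asymm hv21)
    · exact iff_of_false (show ¬ (2:ℕ) < 1 by norm_num) (asymm hv02)
    · exact iff_of_true (show (2:ℕ) < 3 by norm_num) hv21
    · exact iff_of_false (lt_irrefl _) (lt_irrefl _)
  · rintro h ⟨f, hf⟩
    have e01 : (⟨0, by norm_num⟩ : Fin [1,3,2].length) < ⟨1, by norm_num⟩ := by
      simp [Fin.lt_def]
    have e12 : (⟨1, by norm_num⟩ : Fin [1,3,2].length) < ⟨2, by norm_num⟩ := by
      simp [Fin.lt_def]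
    refine h ⟨f ⟨0, by norm_num⟩, f ⟨1, by norm_num⟩, f ⟨2, by norm_num⟩,
      f.strictMono e01, f.strictMono e12, ?_, ?_⟩
    · exact (hf ⟨0, by norm_num⟩ ⟨2, by norm_num⟩).mp (by decide)
    · exact (hf ⟨2, by norm_num⟩ ⟨1, by norm_num⟩).mp (by decide)

lemma avoids213_iff {n : ℕ} (π : Equiv.Perm (Fin n)) :
    AvoidsPat π [2,1,3] ↔
      ¬ ∃ p0 p1 p2 : Fin n, p0 < p1 ∧ p1 < p2 ∧ π p1 < π p0 ∧ π p0 < π p2 := by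
  unfold AvoidsPat
  constructor
  · rintro h ⟨p0, p1, p2, h01, h12, hv10, hv02⟩
    refine h ⟨emb3 p0 p1 p2 h01 h12, ?_⟩
    have hv12 : π p1 < π p2 := hv10.trans hv02
    intro i j
    obtain ⟨i, hi⟩ := i; obtain ⟨j, hj⟩ := j
    have hi' : i < 3 := by simpa using hi
    have hj' : j < 3 := by simpa using hj
    interval_cases i <;> interval_cases j
    · exact iff_of_false (lt_irrefl _) (lt_irrefl _)
    · exact iff_of_false (show ¬ (2:ℕ) < 1 by norm_num) (asymm hv10)
    · exact iff_of_true (show (2:ℕ) < 3 by norm_num) hv02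
    · exact iff_of_true (show (1:ℕ) < 2 by norm_num) hv10
    · exact iff_of_false (lt_irrefl _) (lt_irrefl _)
    · exact iff_of_true (show (1:ℕ) < 3 by norm_num) hv12
    · exact iff_of_false (show ¬ (3:ℕ) < 2 by norm_num) (asymm hv02)
    · exact iff_of_false (show ¬ (3:ℕ) < 1 by norm_num) (asymm hv12)
    · exact iff_of_false (lt_irrefl _) (lt_irrefl _)
  · rintro h ⟨f, hf⟩
    have e01 : (⟨0, by norm_num⟩ : Fin [2,1,3].length) < ⟨1, by norm_num⟩ := by
      simp [Fin.lt_def]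
    have e12 : (⟨1, by norm_num⟩ : Fin [2,1,3].length) < ⟨2, by norm_num⟩ := by
      simp [Fin.lt_def]
    refine h ⟨f ⟨0, by norm_num⟩, f ⟨1, by norm_num⟩, f ⟨2, by norm_num⟩,
      f.strictMono e01, f.strictMono e12, ?_, ?_⟩
    · exact (hf ⟨1, by norm_num⟩ ⟨0, by norm_num⟩).mp (by decide)
    · exact (hf ⟨0, by norm_num⟩ ⟨2, by norm_num⟩).mp (by decide)

end AvoidAux

namespace AvoidAux

lemma avoidsIdk_iff {n k : ℕ} (π : Equiv.Perm (Fin n)) :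
    AvoidsPat π ((List.range k).map (· + 1)) ↔
      ¬ ∃ f : Fin k ↪o Fin n, ∀ i j : Fin k, i < j ↔ π (f i) < π (f j) := by
  have hlen : ((List.range k).map (· + 1)).length = k := by simp
  have hget : ∀ i : Fin ((List.range k).map (· + 1)).length,
      ((List.range k).map (· + 1)).get i = (i : ℕ) + 1 := by
    intro i; simp
  unfold AvoidsPat
  constructor
  · rintro h ⟨f, hf⟩
    refine h ⟨((Fin.castOrderIso hlen).toOrderEmbedding).trans f, ?_⟩
    intro i j
    rw [hget i, hget j]
    have := hf (Fin.cast hlen i) (Fin.cast hlen j)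
    simp only [Fin.lt_def, Fin.coe_cast] at this
    constructor
    · intro hij; exact this.mp (by omega)
    · intro hq; have := this.mpr hq; omega
  · rintro h ⟨f, hf⟩
    refine h ⟨((Fin.castOrderIso hlen.symm).toOrderEmbedding).trans f, ?_⟩
    intro i j
    have := hf (Fin.cast hlen.symm i) (Fin.cast hlen.symm j)
    rw [hget, hget] at this
    simp only [Fin.coe_cast] at this
    simp only [Fin.lt_def]
    constructor
    · intro hij; exact this.mp (by omega)
    · intro hq; have := this.mpr hq; omega

end AvoidAux

namespace AvoidAux

def glueFun {n : ℕ} (a : ℕ) (ha : a ≤ n) (π' : Equiv.Perm (Fin (n - a))) : Fin n → Fin n :=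
  fun i =>
    if h : (i : ℕ) < a then ⟨n - a + i, by omega⟩
    else ⟨π' ⟨i - a, by have := i.isLt; omega⟩, by
      have := (π' ⟨i - a, by have := i.isLt; omega⟩).isLt; omega⟩

lemma glueFun_injective {n : ℕ} (a : ℕ) (ha : a ≤ n) (π' : Equiv.Perm (Fin (n - a))) :
    Function.Injective (glueFun a ha π') := by
  intro i j hij
  unfold glueFun at hij
  split_ifs at hij with h1 h2 h2 <;>
    rw [Fin.mk.injEq] at hij
  · ext; omega
  · have := (π' ⟨j - a, by have := j.isLt; omega⟩).isLt; omega
  · have := (π' ⟨i - a, by have := i.isLt; omega⟩).isLt; omega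
  · have := π'.injective (Fin.ext hij)
    rw [Fin.mk.injEq] at this
    ext; omega

noncomputable def glue {n : ℕ} (a : ℕ) (ha : a ≤ n) (π' : Equiv.Perm (Fin (n - a))) : Equiv.Perm (Fin n) :=
  Equiv.ofBijective _ (Finite.injective_iff_bijective.mp (glueFun_injective a ha π'))

lemma glue_apply_lt {n : ℕ} {a : ℕ} (ha : a ≤ n) (π' : Equiv.Perm (Fin (n - a)))
    {i : Fin n} (h : (i : ℕ) < a) : (glue a ha π' i : ℕ) = n - a + i := by
  simp [glue, Equiv.ofBijective, glueFun, h]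

lemma glue_apply_ge {n : ℕ} {a : ℕ} (ha : a ≤ n) (π' : Equiv.Perm (Fin (n - a)))
    {i : Fin n} (h : a ≤ (i : ℕ)) :
    (glue a ha π' i : ℕ) = π' ⟨i - a, by have := i.isLt; omega⟩ := by
  simp [glue, Equiv.ofBijective, glueFun, Nat.not_lt.mpr h]

end AvoidAux

namespace AvoidAux

lemma emb_le_apply {k n : ℕ} (f : Fin k ↪o Fin n) :
    ∀ m (h : m < k), m ≤ (f ⟨m, h⟩ : ℕ) := by
  intro m
  induction m with
  | zero => intro h; exact Nat.zero_le _
  | succ m IH =>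
    intro h
    have h' : m < k := by omega
    have h1 := IH h'
    have h2 : f ⟨m, h'⟩ < f ⟨m + 1, h⟩ := f.strictMono (by simp [Fin.lt_def])
    have h3 : (f ⟨m, h'⟩ : ℕ) < (f ⟨m + 1, h⟩ : ℕ) := h2
    omega

variable {n a : ℕ} (ha : a ≤ n) (π' : Equiv.Perm (Fin (n - a)))

-- value dichotomy
lemma glue_big {i : Fin n} (h : (i : ℕ) < a) : n - a ≤ (glue a ha π' i : ℕ) := by
  rw [glue_apply_lt ha π' h]; omega

lemma glue_small {i : Fin n} (h : a ≤ (i : ℕ)) : (glue a ha π' i : ℕ) < n - a := by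
  rw [glue_apply_ge ha π' h]; exact (π' _).isLt

lemma glue_pos_of_big {i : Fin n} (h : n - a ≤ (glue a ha π' i : ℕ)) : (i : ℕ) < a := by
  by_contra hc
  have := glue_small ha π' (Nat.not_lt.mp hc)
  omega

lemma glue_run_mono {i j : Fin n} (hi : (i : ℕ) < a) (hj : (j : ℕ) < a)
    (hij : i < j) : (glue a ha π' i : ℕ) < (glue a ha π' j : ℕ) := by
  rw [glue_apply_lt ha π' hi, glue_apply_lt ha π' hj]
  have : (i : ℕ) < (j : ℕ) := hij
  omega

lemma glue_avoids132 (h2 : AvoidsPat π' [1, 3, 2]) :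
    AvoidsPat (glue a ha π') [1, 3, 2] := by
  rw [avoids132_iff] at h2 ⊢
  rintro ⟨p0, p1, p2, h01, h12, hv02, hv21⟩
  have hv02' : ((glue a ha π') p0 : ℕ) < ((glue a ha π') p2 : ℕ) := hv02
  have hv21' : ((glue a ha π') p2 : ℕ) < ((glue a ha π') p1 : ℕ) := hv21
  have h01' : (p0 : ℕ) < (p1 : ℕ) := h01
  have h12' : (p1 : ℕ) < (p2 : ℕ) := h12
  have hp0 : a ≤ (p0 : ℕ) := by
    by_contra hc
    push_neg at hc
    have hb0 : n - a ≤ ((glue a ha π') p0 : ℕ) := glue_big ha π' hc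
    have hp2 : (p2 : ℕ) < a := glue_pos_of_big ha π' (by omega)
    have hp1 : (p1 : ℕ) < a := glue_pos_of_big ha π' (by omega)
    have := glue_run_mono ha π' hp1 hp2 h12
    omega
  have hp1 : a ≤ (p1 : ℕ) := by omega
  have hp2 : a ≤ (p2 : ℕ) := by omega
  refine h2 ⟨⟨p0 - a, by have := p0.isLt; omega⟩, ⟨p1 - a, by have := p1.isLt; omega⟩,
    ⟨p2 - a, by have := p2.isLt; omega⟩, by simp [Fin.lt_def]; omega, by simp [Fin.lt_def]; omega,
    ?_, ?_⟩
  · show (π' _ : ℕ) < (π' _ : ℕ)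
    rw [← glue_apply_ge ha π' hp0, ← glue_apply_ge ha π' hp2]
    omega
  · show (π' _ : ℕ) < (π' _ : ℕ)
    rw [← glue_apply_ge ha π' hp2, ← glue_apply_ge ha π' hp1]
    omega

lemma glue_avoids213 (h3 : AvoidsPat π' [2, 1, 3]) :
    AvoidsPat (glue a ha π') [2, 1, 3] := by
  rw [avoids213_iff] at h3 ⊢
  rintro ⟨p0, p1, p2, h01, h12, hv10, hv02⟩
  have hv10' : ((glue a ha π') p1 : ℕ) < ((glue a ha π') p0 : ℕ) := hv10
  have hv02' : ((glue a ha π') p0 : ℕ) < ((glue a ha π') p2 : ℕ) := hv02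
  have h01' : (p0 : ℕ) < (p1 : ℕ) := h01
  have h12' : (p1 : ℕ) < (p2 : ℕ) := h12
  have hp0 : a ≤ (p0 : ℕ) := by
    by_contra hc
    push_neg at hc
    have hb0 : n - a ≤ ((glue a ha π') p0 : ℕ) := glue_big ha π' hc
    have hp2 : (p2 : ℕ) < a := glue_pos_of_big ha π' (by omega)
    have hp1 : (p1 : ℕ) < a := by omega
    have := glue_run_mono ha π' hc hp1 h01
    omega
  have hp1 : a ≤ (p1 : ℕ) := by omega
  have hp2 : a ≤ (p2 : ℕ) := by omega
  refine h3 ⟨⟨p0 - a, by have := p0.isLt; omega⟩, ⟨p1 - a, by have := p1.isLt; omega⟩,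
    ⟨p2 - a, by have := p2.isLt; omega⟩, by simp [Fin.lt_def]; omega, by simp [Fin.lt_def]; omega,
    ?_, ?_⟩
  · show (π' _ : ℕ) < (π' _ : ℕ)
    rw [← glue_apply_ge ha π' hp1, ← glue_apply_ge ha π' hp0]
    omega
  · show (π' _ : ℕ) < (π' _ : ℕ)
    rw [← glue_apply_ge ha π' hp0, ← glue_apply_ge ha π' hp2]
    omega

lemma glue_avoidsIdk {k : ℕ} (hk : 2 ≤ k) (hak : a ≤ k - 1)
    (h1 : AvoidsPat π' ((List.range k).map (· + 1))) :
    AvoidsPat (glue a ha π') ((List.range k).map (· + 1)) := by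
  rw [avoidsIdk_iff] at h1 ⊢
  rintro ⟨f, hf⟩
  have hk1 : k - 1 < k := by omega
  have h0k : 0 < k := by omega
  have hlast : k - 1 ≤ (f ⟨k - 1, hk1⟩ : ℕ) := emb_le_apply f _ hk1
  have hp0 : a ≤ (f ⟨0, h0k⟩ : ℕ) := by
    by_contra hc
    push_neg at hc
    have hb0 : n - a ≤ ((glue a ha π') (f ⟨0, h0k⟩) : ℕ) := glue_big ha π' hc
    have hlt : (⟨0, h0k⟩ : Fin k) < ⟨k - 1, hk1⟩ := by simp [Fin.lt_def]; omega
    have hv : ((glue a ha π') (f ⟨0, h0k⟩) : ℕ) < ((glue a ha π') (f ⟨k - 1, hk1⟩) : ℕ) := (hf _ _).mp hlt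
    have : (f ⟨k - 1, hk1⟩ : ℕ) < a := glue_pos_of_big ha π' (by omega)
    omega
  have hge : ∀ i : Fin k, a ≤ (f i : ℕ) := by
    intro i
    have h0i : (⟨0, h0k⟩ : Fin k) ≤ i := by simp [Fin.le_def]
    have h2 : ((f ⟨0, h0k⟩ : Fin n) : ℕ) ≤ ((f i : Fin n) : ℕ) := f.monotone h0i
    omega
  have hmono : StrictMono (fun i : Fin k =>
      (⟨(f i : ℕ) - a, by have := (f i).isLt; have := hge i; omega⟩ : Fin (n - a))) := by
    intro i j hij
    have h1' : (f i : ℕ) < (f j : ℕ) := f.strictMono hij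
    have := hge i
    simp only [Fin.lt_def]
    omega
  refine h1 ⟨OrderEmbedding.ofStrictMono _ hmono, ?_⟩
  intro i j
  rw [hf i j, Fin.lt_def, Fin.lt_def]
  have ei : (((glue a ha π') (f i) : Fin n) : ℕ)
      = (π' ((OrderEmbedding.ofStrictMono _ hmono) i) : ℕ) := by
    rw [glue_apply_ge ha π' (hge i)]; rfl
  have ej : (((glue a ha π') (f j) : Fin n) : ℕ)
      = (π' ((OrderEmbedding.ofStrictMono _ hmono) j) : ℕ) := by
    rw [glue_apply_ge ha π' (hge j)]; rfl
  rw [ei, ej]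

end AvoidAux

namespace AvoidAux

lemma run_prefix {n : ℕ} (hn : 0 < n) (π : Equiv.Perm (Fin n))
    (h132 : ¬ ∃ p0 p1 p2 : Fin n, p0 < p1 ∧ p1 < p2 ∧ π p0 < π p2 ∧ π p2 < π p1)
    (h213 : ¬ ∃ p0 p1 p2 : Fin n, p0 < p1 ∧ p1 < p2 ∧ π p1 < π p0 ∧ π p0 < π p2) :
    ∀ i (hi : i < n - (π ⟨0, hn⟩ : ℕ)), (π ⟨i, by omega⟩ : ℕ) = (π ⟨0, hn⟩ : ℕ) + i := by
  set v : ℕ := (π ⟨0, hn⟩ : ℕ) with hv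
  intro i
  induction i using Nat.strong_induction_on with
  | _ i IH =>
    intro hi
    match i, hi with
    | 0, hi => simp
    | (i+1), hi =>
      have hvn0 : v < n := (π ⟨0, hn⟩).isLt
      have hi1n : i + 1 < n := by omega
      have hIH : ∀ m (hm : m ≤ i), (π ⟨m, by omega⟩ : ℕ) = v + m := by
        intro m hm
        exact IH m (by omega) (by omega)
      have hvn : v + i + 1 < n := by omega
      set p : Fin n := π.symm ⟨v + i + 1, hvn⟩ with hp
      have hπp : (π p : ℕ) = v + i + 1 := by rw [hp, Equiv.apply_symm_apply]
      have hpv : ∀ m (hm : m ≤ i), (p : ℕ) ≠ m := by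
        intro m hm hc
        have he : π ⟨m, by omega⟩ = π p := by congr 1; ext; simp [hc]
        have h3 := congrArg Fin.val he
        rw [hIH m hm] at h3
        omega
      have hpge : i + 1 ≤ (p : ℕ) := by
        by_contra hc
        push_neg at hc
        exact hpv p (by omega) rfl
      have hnotlow : ¬ ((π ⟨i + 1, hi1n⟩ : ℕ) < v) := by
        intro hlow
        have hpne : (p : ℕ) ≠ i + 1 := by
          intro hc
          have he : π ⟨i + 1, hi1n⟩ = π p := by congr 1; ext; simp [hc.symm]
          have h3 := congrArg Fin.val he
          omega
        refine h213 ⟨⟨0, hn⟩, ⟨i + 1, hi1n⟩, p, ?_, ?_, ?_, ?_⟩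
        · show (0 : ℕ) < i + 1; omega
        · show (i + 1 : ℕ) < (p : ℕ); omega
        · show (π ⟨i + 1, hi1n⟩ : ℕ) < v; exact hlow
        · show v < (π p : ℕ); omega
      push_neg at hnotlow
      have hnotband : ∀ m (hm : m ≤ i), (π ⟨i + 1, hi1n⟩ : ℕ) ≠ v + m := by
        intro m hm hc
        have he : π ⟨i + 1, hi1n⟩ = π ⟨m, by omega⟩ := by
          have h4 := hIH m hm
          ext
          omega
        have h5 := congrArg Fin.val (π.injective he)
        simp at h5
        omega
      have hge : v + i + 1 ≤ (π ⟨i + 1, hi1n⟩ : ℕ) := by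
        rcases Nat.lt_or_ge (π ⟨i + 1, hi1n⟩ : ℕ) (v + i + 1) with h | h
        · exfalso
          have hm : (π ⟨i + 1, hi1n⟩ : ℕ) - v ≤ i := by omega
          exact hnotband _ hm (by omega)
        · exact h
      rcases Nat.eq_or_lt_of_le hge with h | h
      · exact h.symm
      · exfalso
        have hpne : (p : ℕ) ≠ i + 1 := by
          intro hc
          have he : π ⟨i + 1, hi1n⟩ = π p := by congr 1; ext; simp [hc.symm]
          have h3 := congrArg Fin.val he
          omega
        refine h132 ⟨⟨0, hn⟩, ⟨i + 1, hi1n⟩, p, ?_, ?_, ?_, ?_⟩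
        · show (0 : ℕ) < i + 1; omega
        · show (i + 1 : ℕ) < (p : ℕ); omega
        · show v < (π p : ℕ); omega
        · show (π p : ℕ) < (π ⟨i + 1, hi1n⟩ : ℕ); omega

end AvoidAux

namespace AvoidAux

lemma avoids_of_glue {n a : ℕ} (ha : a ≤ n) (π' : Equiv.Perm (Fin (n - a)))
    (s : List ℕ) (hs : AvoidsPat (glue a ha π') s) : AvoidsPat π' s := by
  rintro ⟨f', hf'⟩
  have hmono : StrictMono (fun i : Fin s.length =>
      (⟨a + (f' i : ℕ), by have := (f' i).isLt; omega⟩ : Fin n)) := by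
    intro i j hij
    have : (f' i : ℕ) < (f' j : ℕ) := f'.strictMono hij
    simp only [Fin.lt_def]
    omega
  refine hs ⟨OrderEmbedding.ofStrictMono _ hmono, ?_⟩
  intro i j
  rw [hf' i j]
  have key : ∀ i : Fin s.length,
      ((glue a ha π') ((OrderEmbedding.ofStrictMono _ hmono) i) : ℕ) = (π' (f' i) : ℕ) := by
    intro i
    have hge : a ≤ (((OrderEmbedding.ofStrictMono _ hmono) i : Fin n) : ℕ) := by
      show a ≤ a + (f' i : ℕ); omega
    rw [glue_apply_ge ha π' hge]
    have harg : (((OrderEmbedding.ofStrictMono _ hmono) i : Fin n) : ℕ) - a = (f' i : ℕ) := by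
      show a + (f' i : ℕ) - a = (f' i : ℕ); omega
    exact congrArg (fun z : Fin (n - a) => (π' z : ℕ)) (Fin.ext harg)
  constructor
  · intro h
    show ((glue a ha π') _ : ℕ) < ((glue a ha π') _ : ℕ)
    rw [key i, key j]; exact h
  · intro h
    have h' : ((glue a ha π') _ : ℕ) < ((glue a ha π') _ : ℕ) := h
    rw [key i, key j] at h'
    exact h'

lemma suffix_small {n : ℕ} (hn : 0 < n) (π : Equiv.Perm (Fin n))
    (h132 : ¬ ∃ p0 p1 p2 : Fin n, p0 < p1 ∧ p1 < p2 ∧ π p0 < π p2 ∧ π p2 < π p1)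
    (h213 : ¬ ∃ p0 p1 p2 : Fin n, p0 < p1 ∧ p1 < p2 ∧ π p1 < π p0 ∧ π p0 < π p2) :
    ∀ i (hi2 : i < n), n - (π ⟨0, hn⟩ : ℕ) ≤ i → (π ⟨i, hi2⟩ : ℕ) < (π ⟨0, hn⟩ : ℕ) := by
  intro i hi2 hia
  set v : ℕ := (π ⟨0, hn⟩ : ℕ) with hv
  by_contra hc
  push_neg at hc
  have hw : (π ⟨i, hi2⟩ : ℕ) - v < n - v := by
    have := (π ⟨i, hi2⟩).isLt; omega
  have h1 := run_prefix hn π h132 h213 ((π ⟨i, hi2⟩ : ℕ) - v) hw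
  have he : π ⟨(π ⟨i, hi2⟩ : ℕ) - v, by omega⟩ = π ⟨i, hi2⟩ := by
    ext; omega
  have h2 := congrArg Fin.val (π.injective he)
  simp at h2
  omega

end AvoidAux

namespace AvoidAux

noncomputable def restrictPerm {n : ℕ} (a : ℕ) (π : Equiv.Perm (Fin n))
    (hsmall : ∀ j : Fin (n - a), ((π ⟨a + j, by have := j.isLt; omega⟩ : Fin n) : ℕ) < n - a) :
    Equiv.Perm (Fin (n - a)) :=
  Equiv.ofBijective (fun j => ⟨(π ⟨a + j, by have := j.isLt; omega⟩ : Fin n), hsmall j⟩)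
    (Finite.injective_iff_bijective.mp (by
      intro i j hij
      rw [Fin.mk.injEq] at hij
      have h2 := π.injective (Fin.ext hij)
      rw [Fin.mk.injEq] at h2
      ext; omega))

lemma restrictPerm_val {n : ℕ} (a : ℕ) (π : Equiv.Perm (Fin n)) (hsmall) (j : Fin (n - a)) :
    (restrictPerm a π hsmall j : ℕ) = ((π ⟨a + j, by have := j.isLt; omega⟩ : Fin n) : ℕ) := rfl

/-- decomposition of an avoider -/
lemma glue_restrict {n : ℕ} (hn : 0 < n) (π : Equiv.Perm (Fin n))
    (h132 : ¬ ∃ p0 p1 p2 : Fin n, p0 < p1 ∧ p1 < p2 ∧ π p0 < π p2 ∧ π p2 < π p1)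
    (h213 : ¬ ∃ p0 p1 p2 : Fin n, p0 < p1 ∧ p1 < p2 ∧ π p1 < π p0 ∧ π p0 < π p2)
    (hsmall : ∀ j : Fin (n - (n - (π ⟨0, hn⟩ : ℕ))),
      ((π ⟨(n - (π ⟨0, hn⟩ : ℕ)) + j, by have := j.isLt; omega⟩ : Fin n) : ℕ)
        < n - (n - (π ⟨0, hn⟩ : ℕ))) :
    glue (n - (π ⟨0, hn⟩ : ℕ)) (by omega) (restrictPerm _ π hsmall) = π := by
  set v : ℕ := (π ⟨0, hn⟩ : ℕ) with hv
  have hvn : v < n := (π ⟨0, hn⟩).isLt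
  apply Equiv.ext
  intro i
  apply Fin.ext
  by_cases hcase : (i : ℕ) < n - v
  · rw [glue_apply_lt _ _ hcase]
    have hrp := run_prefix hn π h132 h213 (i : ℕ) hcase
    have hei : π ⟨(i : ℕ), by omega⟩ = π i := congrArg π (Fin.ext rfl)
    have := congrArg Fin.val hei
    omega
  · push_neg at hcase
    rw [glue_apply_ge _ _ hcase]
    rw [restrictPerm_val]
    have hei : π ⟨n - v + ((⟨(i : ℕ) - (n - v), by have := i.isLt; omega⟩ : Fin (n - (n - v))) : ℕ), by have := i.isLt; omega⟩ = π i := by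
      apply congrArg π
      apply Fin.ext
      show n - v + ((i : ℕ) - (n - v)) = (i : ℕ)
      omega
    exact congrArg Fin.val hei

end AvoidAux

namespace AvoidAux

def Avoider (k n : ℕ) (π : Equiv.Perm (Fin n)) : Prop :=
  AvoidsPat π ((List.range k).map (· + 1)) ∧ AvoidsPat π [1, 3, 2] ∧ AvoidsPat π [2, 1, 3]


lemma avoidCount_eq (k n : ℕ) :
    AvoidCount [(List.range k).map (· + 1), [1, 3, 2], [2, 1, 3]] n
      = Nat.card {π : Equiv.Perm (Fin n) // Avoider k n π} := by
  unfold AvoidCount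
  apply Nat.card_congr
  apply Equiv.subtypeEquivRight
  intro π
  simp [Avoider, List.forall_mem_cons]

lemma card_zero (k : ℕ) (hk : 2 ≤ k) :
    Nat.card {π : Equiv.Perm (Fin 0) // Avoider k 0 π} = 1 := by
  rw [Nat.card_eq_one_iff_unique]
  constructor
  · constructor
    intro x y
    apply Subtype.ext
    apply Equiv.ext
    intro i
    exact i.elim0
  · refine ⟨1, ?_, ?_, ?_⟩
    · rintro ⟨f, -⟩
      exact (f ⟨0, by simp; omega⟩).elim0
    · rintro ⟨f, -⟩
      exact (f ⟨0, by norm_num⟩).elim0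
    · rintro ⟨f, -⟩
      exact (f ⟨0, by norm_num⟩).elim0

lemma nat_card_sigma {s : Finset ℕ} (F : ℕ → Type) [∀ i, Finite (F i)] :
    Nat.card ((i : s) × F i) = ∑ i ∈ s, Nat.card (F i) := by
  classical
  letI : ∀ i, Fintype (F i) := fun i => Fintype.ofFinite (F i)
  simp only [Nat.card_eq_fintype_card]
  rw [Fintype.card_sigma]
  rw [← Finset.sum_coe_sort s (fun i => Fintype.card (F i))]

end AvoidAux

namespace AvoidAux

lemma card_rec (k n : ℕ) (hk : 2 ≤ k) (hn : 0 < n) :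
    Nat.card {π : Equiv.Perm (Fin n) // Avoider k n π}
      = ∑ a ∈ Finset.Icc 1 (min (k - 1) n),
          Nat.card {π' : Equiv.Perm (Fin (n - a)) // Avoider k (n - a) π'} := by
  classical
  have hmem : ∀ a ∈ Finset.Icc 1 (min (k - 1) n), 1 ≤ a ∧ a ≤ k - 1 ∧ a ≤ n := by
    intro a ha
    rw [Finset.mem_Icc, le_min_iff] at ha
    omega
  set s : Finset ℕ := Finset.Icc 1 (min (k - 1) n) with hs
  let F : ℕ → Type := fun a => {π' : Equiv.Perm (Fin (n - a)) // Avoider k (n - a) π'}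
  let Φ : ((a : s) × F (a : ℕ)) → {π : Equiv.Perm (Fin n) // Avoider k n π} := fun x =>
    ⟨glue (x.1 : ℕ) (hmem _ x.1.2).2.2 x.2.1,
      glue_avoidsIdk (hmem _ x.1.2).2.2 x.2.1 hk (hmem _ x.1.2).2.1 x.2.2.1,
      glue_avoids132 (hmem _ x.1.2).2.2 x.2.1 x.2.2.2.1,
      glue_avoids213 (hmem _ x.1.2).2.2 x.2.1 x.2.2.2.2⟩
  have hΦ : Function.Bijective Φ := by
    constructor
    · rintro ⟨af, πa, hπa⟩ ⟨bf, πb, hπb⟩ heq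
      have hglue : glue (af : ℕ) (hmem _ af.2).2.2 πa = glue (bf : ℕ) (hmem _ bf.2).2.2 πb :=
        congrArg Subtype.val heq
      have hab : af = bf := Subtype.ext (by
        have h0 := congrArg (fun e : Equiv.Perm (Fin n) => ((e ⟨0, hn⟩ : Fin n) : ℕ)) hglue
        rw [glue_apply_lt _ _ (show ((⟨0, hn⟩ : Fin n) : ℕ) < (af : ℕ) from (hmem _ af.2).1),
          glue_apply_lt _ _ (show ((⟨0, hn⟩ : Fin n) : ℕ) < (bf : ℕ) from (hmem _ bf.2).1)] at h0
        have h1 := (hmem _ af.2).2.2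
        have h2 := (hmem _ bf.2).2.2
        omega)
      subst hab
      have hpp : πa = πb := by
        apply Equiv.ext
        intro j
        apply Fin.ext
        have hj := j.isLt
        have hjn : (af : ℕ) + (j : ℕ) < n := by
          have h1 := (hmem _ af.2).2.2
          omega
        have e1 := glue_apply_ge (hmem _ af.2).2.2 πa
          (i := ⟨(af : ℕ) + (j : ℕ), hjn⟩) (by show (af : ℕ) ≤ (af : ℕ) + (j : ℕ); omega)
        have e2 := glue_apply_ge (hmem _ af.2).2.2 πb
          (i := ⟨(af : ℕ) + (j : ℕ), hjn⟩) (by show (af : ℕ) ≤ (af : ℕ) + (j : ℕ); omega)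
        have h0 := congrArg
          (fun e : Equiv.Perm (Fin n) => ((e ⟨(af : ℕ) + (j : ℕ), hjn⟩ : Fin n) : ℕ)) hglue
        rw [e1, e2] at h0
        have harg : (⟨(af : ℕ) + (j : ℕ) - (af : ℕ), by omega⟩ : Fin (n - (af : ℕ))) = j := by
          apply Fin.ext; show (af : ℕ) + (j : ℕ) - (af : ℕ) = (j : ℕ); omega
        rw [harg] at h0
        exact h0
      subst hpp
      rfl
    · rintro ⟨π, hπ⟩
      have h132 := (avoids132_iff π).mp hπ.2.1
      have h213 := (avoids213_iff π).mp hπ.2.2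
      set v : ℕ := (π ⟨0, hn⟩ : ℕ) with hv
      have hvn : v < n := (π ⟨0, hn⟩).isLt
      set a : ℕ := n - v with hadef
      have ha : a ≤ n := by omega
      have ha1 : 1 ≤ a := by omega
      -- a ≤ k - 1
      have hak : a ≤ k - 1 := by
        by_contra hc
        push_neg at hc
        have hka : k ≤ a := by omega
        have hIdk := (avoidsIdk_iff π).mp hπ.1
        have hmono : StrictMono (fun i : Fin k => (⟨(i : ℕ), by have := i.isLt; omega⟩ : Fin n)) := by
          intro i j hij
          exact hij
        refine hIdk ⟨OrderEmbedding.ofStrictMono _ hmono, ?_⟩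
        intro i j
        have hvi : ∀ i : Fin k, ((π ((OrderEmbedding.ofStrictMono _ hmono) i) : Fin n) : ℕ) = v + (i : ℕ) := by
          intro i
          have hrp := run_prefix hn π h132 h213 (i : ℕ) (by have := i.isLt; omega)
          have hei : π ⟨(i : ℕ), by have := i.isLt; omega⟩
              = π ((OrderEmbedding.ofStrictMono _ hmono) i) := congrArg π (Fin.ext rfl)
          have := congrArg Fin.val hei
          omega
        rw [Fin.lt_def, Fin.lt_def, hvi i, hvi j]
        omega
      -- the restriction
      have hsmall : ∀ j : Fin (n - a),
          ((π ⟨a + (j : ℕ), by have := j.isLt; omega⟩ : Fin n) : ℕ) < n - a := by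
        intro j
        have hj := j.isLt
        have := suffix_small hn π h132 h213 (a + (j : ℕ)) (by omega) (by omega)
        omega
      have hglue := glue_restrict hn π h132 h213 hsmall
      have hmema : a ∈ s := by
        rw [hs, Finset.mem_Icc, le_min_iff]
        omega
      have hAv : Avoider k (n - a) (restrictPerm a π hsmall) := by
        refine ⟨?_, ?_, ?_⟩ <;>
        · apply avoids_of_glue ha (restrictPerm a π hsmall)
          rw [show glue a ha (restrictPerm a π hsmall) = π from hglue]
          first
            | exact hπ.1
            | exact hπ.2.1
            | exact hπ.2.2
      refine ⟨⟨⟨a, hmema⟩, ⟨restrictPerm a π hsmall, hAv⟩⟩, ?_⟩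
      apply Subtype.ext
      show glue a _ (restrictPerm a π hsmall) = π
      exact hglue
  rw [Nat.card_congr (Equiv.ofBijective Φ hΦ).symm]
  exact nat_card_sigma F

end AvoidAux

namespace AvoidAux

lemma genFib_step (m t : ℕ) :
    genFib m (t + 2) = ∑ i ∈ Finset.range m, genFib m (t + 1 - i) := by
  rw [genFib]

lemma main (k : ℕ) (hk : 2 ≤ k) :
    ∀ n, AvoidCount [(List.range k).map (· + 1), [1, 3, 2], [2, 1, 3]] n
      = genFib (k - 1) (n + 1) := by
  intro n
  induction n using Nat.strong_induction_on with
  | _ n IH =>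
    match n with
    | 0 =>
      rw [avoidCount_eq, card_zero k hk]
      simp [genFib]
    | (t + 1) =>
      rw [avoidCount_eq, card_rec k (t + 1) hk (by omega)]
      have hterm : ∀ a ∈ Finset.Icc 1 (min (k - 1) (t + 1)),
          Nat.card {π' : Equiv.Perm (Fin (t + 1 - a)) // Avoider k (t + 1 - a) π'}
            = genFib (k - 1) (t + 2 - a) := by
        intro a ha
        rw [Finset.mem_Icc] at ha
        have h1 : t + 1 - a < t + 1 := by omega
        have h2 := IH (t + 1 - a) h1
        rw [avoidCount_eq] at h2
        rw [h2]
        congr 1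
        omega
      rw [Finset.sum_congr rfl hterm]
      have hsubset : Finset.Icc 1 (min (k - 1) (t + 1)) ⊆ Finset.Icc 1 (k - 1) :=
        Finset.Icc_subset_Icc_right (min_le_left _ _)
      have hzero : ∀ x ∈ Finset.Icc 1 (k - 1), x ∉ Finset.Icc 1 (min (k - 1) (t + 1)) →
          genFib (k - 1) (t + 2 - x) = 0 := by
        intro x hx hnx
        rw [Finset.mem_Icc] at hx
        rw [Finset.mem_Icc, le_min_iff] at hnx
        have : t + 2 - x = 0 := by omega
        rw [this]
        simp [genFib]
      rw [Finset.sum_subset hsubset hzero]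
      rw [← Finset.Ico_add_one_right_eq_Icc, Finset.sum_Ico_eq_sum_range]
      rw [show t + 1 + 1 = t + 2 by omega, genFib_step]
      apply Finset.sum_congr (by congr 1)
      intro i hi
      congr 1
      omega

end AvoidAux



theorem avoid_12k_132_213_eq_genFib (k n : ℕ) (hk : 2 ≤ k) :
    AvoidCount [(List.range k).map (· + 1), [1, 3, 2], [2, 1, 3]] n
      = genFib (k - 1) (n + 1) := by
  exact AvoidAux.main k hk n
end

section
/- For all k ≥ 2 and all n ≥ 0, the number of permutations of [n] avoiding the patterns 123, 132, and k−1 k−2 … 2 1 k equals the (k−1)-generalized Fibonacci number F_{k-1,n+1}. -/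
/-
A permutation avoids both 123 and 132 exactly when no entry has two larger entries to its right.
For such a permutation of `{0, …, n}` with its maximum `n` at position `r`, every earlier entry
already has `n` to its right, so the entries before `n` decrease, and counting the larger entries
of each of them forces the staircase `n - 1, n - 2, …, n - r`; the entries after `n` form an
arbitrary such permutation `τ` of `{0, …, n - r - 1}`. An occurrence of `m ⋯ 1 (m + 1)` cannot
start at or before `r` unless `r ≥ m`, in which case the staircase together with `n` is one, so
the pattern is avoided iff `r < m` and `τ` avoids it. Hence the counts `a_n` satisfy
`a_{n+1} = ∑_{r < min (m, n + 1)} a_{n-r}`, the recursion of the `m`-generalized Fibonacci numbers.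
-/

open Equiv Finset Function

variable {n : ℕ}

/-- Entries of `π` at increasing positions compare at least as the letters of `w` do. For an
injective `w` this is containment of the pattern `w` (`avoidsPat_ofFn_iff`); a non-injective `w`
such as `![0, 1, 1]` is a partial pattern. -/
def Contains (π : Perm (Fin n)) {L : ℕ} (w : Fin L → ℕ) : Prop :=
  ∃ g : Fin L → Fin n, StrictMono g ∧ ∀ i j, w i < w j → π (g i) < π (g j)

lemma Contains.mono {π : Perm (Fin n)} {L : ℕ} {w w' : Fin L → ℕ}
    (hw : ∀ i j, w' i < w' j → w i < w j) (h : Contains π w) : Contains π w' :=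
  let ⟨g, hg, hgw⟩ := h
  ⟨g, hg, fun i j hij => hgw i j (hw i j hij)⟩

lemma StrictMono.val_le_val_apply {k : ℕ} {g : Fin k → Fin n} (hg : StrictMono g) (i : Fin k) :
    (i : ℕ) ≤ g i := by
  have := card_le_card_of_injOn g (s := Iic i) (t := Iic (g i))
    (fun a ha => by simpa using hg.monotone (mem_Iic.1 ha)) hg.injective.injOn
  simpa using this

lemma avoidsPat_ofFn_iff {L : ℕ} {w : Fin L → ℕ} (hw : Injective w) (π : Perm (Fin n)) :
    AvoidsPat π (List.ofFn w) ↔ ¬ Contains π w := by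
  have hL : (List.ofFn w).length = L := List.length_ofFn
  have hget (i : Fin (List.ofFn w).length) : (List.ofFn w).get i = w (Fin.cast hL i) :=
    List.get_ofFn ..
  refine not_congr ⟨fun ⟨f, hf⟩ => ⟨f ∘ Fin.cast hL.symm, f.strictMono.comp fun _ _ h => h,
      fun i j hij => (hf _ _).1 (by simpa [hget] using hij)⟩,
    fun ⟨g, hg, hgw⟩ => ?_⟩
  -- `w` and `π ∘ g` are both injective, so comparisons in one direction determine the other
  have hiff (a b : Fin L) : w a < w b ↔ π (g a) < π (g b) := by
    refine ⟨hgw a b, fun hπ => (hw.ne ?_).lt_or_gt.resolve_right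
      fun hba => (hgw b a hba).asymm hπ⟩
    rintro rfl
    exact hπ.false
  exact ⟨(Fin.castOrderIso hL).toOrderEmbedding.trans (OrderEmbedding.ofStrictMono g hg),
    fun i j => (hget i).symm ▸ (hget j).symm ▸ hiff _ _⟩

def NoTwoLargerLater (π : Perm (Fin n)) : Prop :=
  ∀ ⦃i j l : Fin n⦄, i < j → j < l → π i < π j → π i < π l → False

lemma noTwoLargerLater_iff_not_contains (π : Perm (Fin n)) :
    NoTwoLargerLater π ↔ ¬ Contains π ![0, 1, 1] := by
  constructor
  · rintro h ⟨g, hg, hgw⟩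
    exact h (hg (show (0 : Fin 3) < 1 by decide)) (hg (show (1 : Fin 3) < 2 by decide))
      (hgw 0 1 (by decide)) (hgw 0 2 (by decide))
  · intro h i j l hij hjl hj hl
    refine h ⟨![i, j, l], by simp [hij, hjl], ?_⟩
    intro a b; fin_cases a <;> fin_cases b <;> simp [*]

lemma avoidsPat_123_and_132_iff (π : Perm (Fin n)) :
    AvoidsPat π [1, 2, 3] ∧ AvoidsPat π [1, 3, 2] ↔ NoTwoLargerLater π := by
  rw [show [1, 2, 3] = List.ofFn ![1, 2, 3] from rfl,
    show [1, 3, 2] = List.ofFn ![1, 3, 2] from rfl,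
    avoidsPat_ofFn_iff (by decide), avoidsPat_ofFn_iff (by decide),
    noTwoLargerLater_iff_not_contains, ← not_or, not_congr]
  refine ⟨fun h => h.elim (.mono (by decide)) (.mono (by decide)), fun ⟨g, hg, hgw⟩ => ?_⟩
  have h01 := hgw 0 1 (by decide)
  have h02 := hgw 0 2 (by decide)
  rcases lt_or_gt_of_ne (π.injective.ne (hg.injective.ne (show (1 : Fin 3) ≠ 2 by decide)))
    with h12 | h21
  · refine .inl ⟨g, hg, ?_⟩
    intro a b; fin_cases a <;> fin_cases b <;> simp [*]
  · refine .inr ⟨g, hg, ?_⟩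
    intro a b; fin_cases a <;> fin_cases b <;> simp [*]

def descThenMax (m : ℕ) (i : Fin (m + 1)) : ℕ := if (i : ℕ) < m then m - i else m + 1

lemma descThenMax_injective (m : ℕ) : Injective (descThenMax m) := by
  intro i j h
  simp only [descThenMax] at h
  ext
  split_ifs at h <;> omega

lemma ofFn_descThenMax (m : ℕ) :
    List.ofFn (descThenMax m) = (List.range m).reverse.map (· + 1) ++ [m + 1] := by
  refine List.ext_getElem (by simp) fun i h₁ h₂ => ?_
  simp only [List.getElem_ofFn, descThenMax]
  split_ifs with hi
  · rw [List.getElem_append_left (by simpa using hi)]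
    simp only [List.map_reverse, List.getElem_reverse, List.getElem_map, List.getElem_range,
      List.length_map, List.length_range]
    omega
  · obtain rfl : i = m := by rw [List.length_ofFn] at h₁; omega
    simp [List.getElem_append_right]

section MaxPos

variable (π : Perm (Fin (n + 1)))

def maxPos : Fin (n + 1) := π.symm (Fin.last n)

@[simp] lemma apply_maxPos : π (maxPos π) = Fin.last n := π.apply_symm_apply _

lemma apply_lt_last_iff {a : Fin (n + 1)} : π a < Fin.last n ↔ a ≠ maxPos π := by
  rw [← apply_maxPos π, Ne, ← π.injective.eq_iff, apply_maxPos, lt_iff_le_and_ne]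
  simp [Fin.le_last]

lemma card_filter_lt_apply (a : Fin (n + 1)) : #{p | π a < π p} = n - π a := by
  rw [card_equiv π (t := Ioi (π a)) (by simp), Fin.card_Ioi]
  omega

variable {π} (h : NoTwoLargerLater π)
include h

lemma le_val_apply_add_val (a : Fin (n + 1)) : n ≤ π a + a + 1 := by
  have hlater : #{p | a < p ∧ π a < π p} ≤ 1 :=
    card_le_one.2 fun p hp q hq => by
      simp only [mem_filter, mem_univ, true_and] at hp hq
      by_contra hpq
      rcases lt_or_gt_of_ne hpq with hpq | hqp
      · exact h hp.1 hpq hp.2 hq.2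
      · exact h hq.1 hqp hq.2 hp.2
  have hsub : ({p | π a < π p} : Finset _) ⊆
      Iio a ∪ ({p | a < p ∧ π a < π p} : Finset _) := by
    intro p hp
    simp only [mem_filter, mem_univ, true_and, mem_union, mem_Iio] at hp ⊢
    rcases lt_trichotomy p a with hpa | rfl | hap
    · exact .inl hpa
    · exact (lt_irrefl _ hp).elim
    · exact .inr ⟨hap, hp⟩
  have := (card_le_card hsub).trans (card_union_le _ _)
  rw [card_filter_lt_apply, Fin.card_Iio] at this
  omega

lemma apply_lt_apply_of_lt_maxPos {a b : Fin (n + 1)} (hba : b < a) (ha : a < maxPos π) :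
    π a < π b := by
  refine lt_of_le_of_ne (not_lt.1 fun hab => h hba ha hab ?_) (π.injective.ne hba.ne')
  rw [apply_maxPos, apply_lt_last_iff]
  exact (hba.trans ha).ne

lemma val_apply_of_lt_maxPos {a : Fin (n + 1)} (ha : a < maxPos π) : (π a : ℕ) = n - 1 - a := by
  have hsub : insert (maxPos π) (Iio a) ⊆ ({p | π a < π p} : Finset _) := by
    intro p hp
    simp only [mem_insert, mem_Iio, mem_filter, mem_univ, true_and] at hp ⊢
    rcases hp with rfl | hpa
    · rw [apply_maxPos, apply_lt_last_iff]; exact ha.ne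
    · exact apply_lt_apply_of_lt_maxPos h hpa ha
  have := card_le_card hsub
  rw [card_insert_of_notMem (by simpa using ha.le), Fin.card_Iio, card_filter_lt_apply] at this
  have := le_val_apply_add_val h a
  omega

lemma val_apply_lt_of_maxPos_lt {r j : Fin (n + 1)} (hr : maxPos π = r) (hj : r < j) :
    (π j : ℕ) < n - r := by
  subst hr
  by_contra! hle
  have hlt : (π j : ℕ) < n := (apply_lt_last_iff π).2 hj.ne'
  set a : Fin (n + 1) := ⟨n - 1 - π j, by omega⟩
  have ha : a < maxPos π := by rw [Fin.lt_def]; dsimp only [a]; omega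
  have haj : a = j := π.injective <| Fin.ext <| by
    rw [val_apply_of_lt_maxPos h ha]; dsimp only [a]; omega
  exact (ha.trans hj).ne haj

end MaxPos

def SuffixAfter (π : Perm (Fin (n + 1))) (r : Fin (n + 1)) (τ : Perm (Fin (n - r))) : Prop :=
  ∀ (i : Fin (n + 1)) (j : Fin (n - r)), (i : ℕ) = r + 1 + j → (π i : ℕ) = τ j

section SuffixAfter

variable {π : Perm (Fin (n + 1))} {r : Fin (n + 1)} {τ : Perm (Fin (n - r))}

lemma SuffixAfter.contains {L : ℕ} {w : Fin L → ℕ} (hs : SuffixAfter π r τ)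
    (hτ : Contains τ w) : Contains π w := by
  obtain ⟨g, hg, hgw⟩ := hτ
  refine ⟨fun t => ⟨r + 1 + g t, by omega⟩, fun s t hst => ?_, fun s t hst => ?_⟩
  · have := hg hst; simp only [Fin.lt_def] at this ⊢; omega
  · rw [Fin.lt_def, hs _ (g s) rfl, hs _ (g t) rfl]
    exact hgw s t hst

lemma SuffixAfter.contains_of_forall_lt {L : ℕ} {w : Fin L → ℕ} (hs : SuffixAfter π r τ)
    {g : Fin L → Fin (n + 1)} (hg : StrictMono g) (hgr : ∀ t, r < g t)
    (hgw : ∀ s t, w s < w t → π (g s) < π (g t)) : Contains τ w := by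
  have hgr' (t : Fin L) : (r : ℕ) < g t := hgr t
  let g' (t : Fin L) : Fin (n - r) := ⟨g t - r - 1, by have := hgr' t; omega⟩
  have hval (t : Fin L) : (g t : ℕ) = r + 1 + g' t := by have := hgr' t; simp only [g']; omega
  refine ⟨g', fun s t hst => ?_, fun s t hst => ?_⟩
  · have := hg hst; have := hgr' s; simp only [Fin.lt_def, g'] at this ⊢; omega
  · have := hgw s t hst
    rwa [Fin.lt_def, hs _ _ (hval s), hs _ _ (hval t)] at this

lemma SuffixAfter.noTwoLargerLater (hs : SuffixAfter π r τ) (h : NoTwoLargerLater π) :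
    NoTwoLargerLater τ := by
  rw [noTwoLargerLater_iff_not_contains] at h ⊢
  exact fun hτ => h (hs.contains hτ)

lemma SuffixAfter.val_apply_lt (hs : SuffixAfter π r τ) {i : Fin (n + 1)} (hi : r < i) :
    (π i : ℕ) < n - r := by
  have hi' : (r : ℕ) < i := hi
  rw [hs i ⟨i - r - 1, by have := i.isLt; omega⟩ (by dsimp only; omega)]
  exact Fin.isLt _

noncomputable def restrictAfter (π : Perm (Fin (n + 1))) (r : Fin (n + 1))
    (h : ∀ i, r < i → (π i : ℕ) < n - r) : Perm (Fin (n - r)) :=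
  .ofBijective
    (fun j => ⟨π ⟨r + 1 + j, by have := j.isLt; omega⟩,
      h _ (by rw [Fin.lt_def]; dsimp only; omega)⟩)
    (Finite.injective_iff_bijective.1 fun a b hab => by
      have := congrArg Fin.val (π.injective (Fin.ext (Fin.mk.inj hab)))
      dsimp only at this
      exact Fin.ext (by omega))

lemma suffixAfter_restrictAfter (h : ∀ i, r < i → (π i : ℕ) < n - r) :
    SuffixAfter π r (restrictAfter π r h) := by
  intro i j hij
  simp only [restrictAfter, ofBijective_apply]
  congr 2
  exact Fin.ext hij

lemma SuffixAfter.unique {τ τ' : Perm (Fin (n - r))} (hs : SuffixAfter π r τ)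
    (hs' : SuffixAfter π r τ') : τ = τ' :=
  Equiv.ext fun j => Fin.ext <| by
    rw [← hs ⟨r + 1 + j, by have := j.isLt; omega⟩ j rfl, hs' _ j rfl]

end SuffixAfter

section Staircase

variable (r : Fin (n + 1)) (τ : Perm (Fin (n - r)))

-- In one-line notation: `n - 1, n - 2, …, n - r, n`, followed by `τ`.
def prependStaircaseFun (i : Fin (n + 1)) : Fin (n + 1) :=
  if hlt : (i : ℕ) < r then ⟨n - 1 - i, by omega⟩
  else if heq : (i : ℕ) = r then Fin.last n
  else Fin.castLE (by omega) (τ ⟨i - r - 1, by have := i.isLt; omega⟩)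

lemma prependStaircaseFun_injective : Injective (prependStaircaseFun r τ) := by
  intro a b hab
  have hv := congrArg Fin.val hab
  simp only [prependStaircaseFun] at hv
  ext
  split_ifs at hv <;>
    simp only [Fin.val_castLE, Fin.val_last, Fin.val_inj, EmbeddingLike.apply_eq_iff_eq,
      Fin.mk.injEq] at hv <;>
    grind

noncomputable def prependStaircase : Perm (Fin (n + 1)) :=
  .ofBijective _ (Finite.injective_iff_bijective.1 (prependStaircaseFun_injective r τ))

variable {r τ}

lemma val_prependStaircase_of_lt {i : Fin (n + 1)} (hi : i < r) :
    (prependStaircase r τ i : ℕ) = n - 1 - i := by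
  simp [prependStaircase, prependStaircaseFun, Fin.lt_def.1 hi]

lemma prependStaircase_apply_self : prependStaircase r τ r = Fin.last n := by
  simp [prependStaircase, prependStaircaseFun]

lemma maxPos_prependStaircase : maxPos (prependStaircase r τ) = r := by
  rw [maxPos, symm_apply_eq, prependStaircase_apply_self]

lemma suffixAfter_prependStaircase : SuffixAfter (prependStaircase r τ) r τ := by
  intro i j hij
  have hlt : ¬ (i : ℕ) < r := by omega
  have hne : ¬ (i : ℕ) = r := by omega
  simp only [prependStaircase, ofBijective_apply, prependStaircaseFun, dif_neg hlt, dif_neg hne,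
    Fin.val_castLE]
  congr 3
  omega

lemma noTwoLargerLater_prependStaircase (h : NoTwoLargerLater τ) :
    NoTwoLargerLater (prependStaircase r τ) := by
  intro i j l hij hjl hj hl
  rcases lt_trichotomy i r with hir | hir | hri
  · have hlarger (p : Fin (n + 1)) (hip : i < p)
        (hp : prependStaircase r τ i < prependStaircase r τ p) : p = r := by
      rw [Fin.lt_def, val_prependStaircase_of_lt hir] at hp
      rcases lt_trichotomy p r with hpr | hpr | hrp
      · rw [val_prependStaircase_of_lt hpr] at hp
        simp only [Fin.lt_def] at hip hir hpr
        omega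
      · exact hpr
      · have := (suffixAfter_prependStaircase (τ := τ)).val_apply_lt hrp
        simp only [Fin.lt_def] at hir
        omega
    exact hjl.ne ((hlarger j hij hj).trans (hlarger l (hij.trans hjl) hl).symm)
  · rw [hir, prependStaircase_apply_self] at hj
    exact (Fin.le_last _).not_gt hj
  · refine (noTwoLargerLater_iff_not_contains τ).1 h
      (suffixAfter_prependStaircase.contains_of_forall_lt (g := ![i, j, l])
        (by simp [hij, hjl]) ?_ ?_)
    · intro t; fin_cases t <;> simp [hri, hri.trans hij, hri.trans (hij.trans hjl)]
    · intro a b; fin_cases a <;> fin_cases b <;> simp [*]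

end Staircase

lemma eq_prependStaircase {π : Perm (Fin (n + 1))} {r : Fin (n + 1)} {τ : Perm (Fin (n - r))}
    (h : NoTwoLargerLater π) (hr : maxPos π = r) (hs : SuffixAfter π r τ) :
    π = prependStaircase r τ := by
  refine Equiv.ext fun i => Fin.ext ?_
  rcases lt_trichotomy i r with hir | hir | hri
  · rw [val_prependStaircase_of_lt hir, val_apply_of_lt_maxPos h (by rwa [hr])]
  · rw [hir, prependStaircase_apply_self, ← hr, apply_maxPos]
  · have hri' : (r : ℕ) < i := hri
    let j : Fin (n - r) := ⟨i - r - 1, by have := i.isLt; omega⟩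
    have hj : (i : ℕ) = r + 1 + j := by dsimp only [j]; omega
    rw [hs i j hj, suffixAfter_prependStaircase i j hj]

section DescThenMax

variable {m : ℕ} {π : Perm (Fin (n + 1))}

lemma contains_descThenMax_of_le_maxPos (h : NoTwoLargerLater π) (hm : m ≤ maxPos π) :
    Contains π (descThenMax m) := by
  have hmn : m ≤ n := hm.trans (Nat.lt_succ_iff.1 (maxPos π).isLt)
  let g (i : Fin (m + 1)) : Fin (n + 1) := if hi : (i : ℕ) < m then ⟨i, by omega⟩ else maxPos π
  refine ⟨g, fun i j hij => ?_, fun i j hij => ?_⟩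
  · have := j.isLt
    rw [Fin.lt_def] at hij
    simp only [g]
    split_ifs <;> simp only [Fin.lt_def, lt_self_iff_false] <;> omega
  · simp only [descThenMax] at hij
    simp only [g]
    split_ifs at hij ⊢ with hi hj
    · rw [Fin.lt_def, val_apply_of_lt_maxPos h (by rw [Fin.lt_def]; dsimp only; omega),
        val_apply_of_lt_maxPos h (by rw [Fin.lt_def]; dsimp only; omega)]
      dsimp only
      omega
    · rw [apply_maxPos, apply_lt_last_iff, Ne, Fin.ext_iff]
      dsimp only
      omega
    all_goals omega

lemma SuffixAfter.contains_descThenMax_iff {r : Fin (n + 1)} {τ : Perm (Fin (n - r))}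
    (hs : SuffixAfter π r τ) (h : NoTwoLargerLater π) (hr : maxPos π = r) (hrm : (r : ℕ) < m) :
    Contains π (descThenMax m) ↔ Contains τ (descThenMax m) := by
  subst hr
  refine ⟨fun ⟨g, hg, hgw⟩ => hs.contains_of_forall_lt hg (fun t => ?_) hgw, hs.contains⟩
  refine lt_of_lt_of_le ?_ (hg.monotone (Fin.zero_le t))
  have hlast : π (g 0) < π (g (Fin.last m)) := hgw _ _ (by simp [descThenMax, hrm.pos])
  have hm : m ≤ g (Fin.last m) := by simpa using hg.val_le_val_apply (Fin.last m)
  by_contra! h0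
  rcases h0.lt_or_eq with h0 | h0
  · have h0' := val_apply_of_lt_maxPos h h0
    have hl := val_apply_lt_of_maxPos_lt h rfl (j := g (Fin.last m)) (by rw [Fin.lt_def]; omega)
    rw [Fin.lt_def] at hlast h0
    omega
  · rw [h0, apply_maxPos] at hlast
    exact (Fin.le_last _).not_gt hlast

end DescThenMax

def AvoidsTriple (m : ℕ) (π : Perm (Fin n)) : Prop :=
  NoTwoLargerLater π ∧ ¬ Contains π (descThenMax m)

section Counting

variable {m : ℕ}

lemma AvoidsTriple.maxPos_lt {π : Perm (Fin (n + 1))} (h : AvoidsTriple m π) : (maxPos π : ℕ) < m :=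
  not_le.1 fun hm => h.2 (contains_descThenMax_of_le_maxPos h.1 hm)

lemma SuffixAfter.avoidsTriple_iff {π : Perm (Fin (n + 1))} {r : Fin (n + 1)}
    {τ : Perm (Fin (n - r))} (hs : SuffixAfter π r τ) (h : NoTwoLargerLater π)
    (hr : maxPos π = r) (hrm : (r : ℕ) < m) : AvoidsTriple m π ↔ AvoidsTriple m τ := by
  rw [AvoidsTriple, AvoidsTriple, hs.contains_descThenMax_iff h hr hrm]
  exact and_congr_left' ⟨fun _ => hs.noTwoLargerLater h, fun _ => h⟩

noncomputable def avoidsTripleFiberEquiv {r : Fin (n + 1)} (hrm : (r : ℕ) < m) :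
    {π : Perm (Fin (n + 1)) // AvoidsTriple m π ∧ maxPos π = r} ≃
      {τ : Perm (Fin (n - r)) // AvoidsTriple m τ} where
  toFun π :=
    ⟨restrictAfter π.1 r fun _ => val_apply_lt_of_maxPos_lt π.2.1.1 π.2.2,
      ((suffixAfter_restrictAfter _).avoidsTriple_iff π.2.1.1 π.2.2 hrm).1 π.2.1⟩
  invFun τ :=
    ⟨prependStaircase r τ.1, (suffixAfter_prependStaircase.avoidsTriple_iff
      (noTwoLargerLater_prependStaircase τ.2.1) maxPos_prependStaircase hrm).2 τ.2,
      maxPos_prependStaircase⟩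
  left_inv π := Subtype.ext (eq_prependStaircase π.2.1.1 π.2.2
    (suffixAfter_restrictAfter fun _ => val_apply_lt_of_maxPos_lt π.2.1.1 π.2.2)).symm
  right_inv τ := Subtype.ext <|
    (suffixAfter_restrictAfter fun _ => val_apply_lt_of_maxPos_lt
      (noTwoLargerLater_prependStaircase τ.2.1) maxPos_prependStaircase).unique
      suffixAfter_prependStaircase

noncomputable def numAvoidsTriple (m n : ℕ) : ℕ := Nat.card {π : Perm (Fin n) // AvoidsTriple m π}

lemma numAvoidsTriple_zero : numAvoidsTriple m 0 = 1 :=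
  Nat.card_eq_one_iff_unique.2 ⟨⟨fun _ _ => Subtype.ext (Subsingleton.elim _ _)⟩,
    ⟨⟨1, fun i => i.elim0, fun ⟨g, _⟩ => (g 0).elim0⟩⟩⟩

lemma numAvoidsTriple_succ (n : ℕ) :
    numAvoidsTriple m (n + 1) = ∑ r ∈ range (n + 1), if r < m then numAvoidsTriple m (n - r) else 0 := by
  classical
  have hfiber (r : Fin (n + 1)) : Nat.card {π // AvoidsTriple m π ∧ maxPos π = r} =
      if (r : ℕ) < m then numAvoidsTriple m (n - r) else 0 := by
    split_ifs with hrm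
    · exact Nat.card_congr (avoidsTripleFiberEquiv hrm)
    · have : IsEmpty {π // AvoidsTriple m π ∧ maxPos π = r} :=
        ⟨fun π => hrm (π.2.2 ▸ π.2.1.maxPos_lt)⟩
      exact Nat.card_of_isEmpty
  rw [← Fin.sum_univ_eq_sum_range (fun r => if r < m then numAvoidsTriple m (n - r) else 0),
    ← sum_congr rfl fun r _ => hfiber r]
  simp only [numAvoidsTriple, Nat.card_eq_fintype_card, Fintype.card_subtype]
  rw [card_eq_sum_card_fiberwise (f := maxPos) (t := univ) (fun _ _ => mem_univ _)]
  simp [filter_filter]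

end Counting

lemma genFib_succ_succ (m n : ℕ) :
    genFib m (n + 2) = ∑ r ∈ range (n + 1), if r < m then genFib m (n - r + 1) else 0 := by
  have hsub : {r ∈ range (n + 1) | r < m} ⊆ range m := fun r hr => by
    simp only [mem_filter, mem_range] at hr ⊢
    exact hr.2
  rw [← sum_filter, genFib, ← sum_subset hsub fun r hr hr' => ?_]
  · refine sum_congr rfl fun r hr => ?_
    simp only [mem_filter, mem_range] at hr
    congr 1
    omega
  · simp only [mem_filter, mem_range, not_and, not_lt] at hr hr'
    rw [show n + 1 - r = 0 by omega, genFib]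

lemma numAvoidsTriple_eq_genFib (m n : ℕ) : numAvoidsTriple m n = genFib m (n + 1) := by
  induction n using Nat.strong_induction_on with
  | _ n ih =>
    rcases n with _ | n
    · simp [numAvoidsTriple_zero, genFib]
    · rw [numAvoidsTriple_succ, genFib_succ_succ]
      refine sum_congr rfl fun r hr => ?_
      rw [ih _ (by rw [mem_range] at hr; omega)]

theorem avoid_123_132_desc_k_eq_genFib (k n : ℕ) (hk : 2 ≤ k) :
    AvoidCount [[1, 2, 3], [1, 3, 2], ((List.range (k - 1)).reverse.map (· + 1)) ++ [k]] n
      = genFib (k - 1) (n + 1) := by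
  obtain ⟨m, rfl⟩ : ∃ m, k = m + 1 := ⟨k - 1, by omega⟩
  rw [Nat.add_sub_cancel, ← ofFn_descThenMax, AvoidCount, ← numAvoidsTriple_eq_genFib]
  refine Nat.card_congr (Equiv.subtypeEquivRight fun π => ?_)
  simp only [List.mem_cons, List.not_mem_nil, or_false, forall_eq_or_imp, forall_eq]
  rw [← and_assoc, avoidsPat_123_and_132_iff, avoidsPat_ofFn_iff (descThenMax_injective m)]
  rfl
end

section
/- Fix n ≥ 1 and k ≥ 2. Every permutation π of [n] avoiding 12…k, 132, and 213 has the form n−j+1, n−j+2, …, n, σ, where j = π^{-1}(n) and σ is a permutation of [n−j] avoiding 12…k, 132, and 213. -/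
/-- Auxiliary function hitting three given points of `Fin n`. -/
def emb3fun {n : ℕ} (a b c : Fin n) : Fin 3 → Fin n :=
  fun i => match i with
  | ⟨0, _⟩ => a
  | ⟨1, _⟩ => b
  | ⟨2, _⟩ => c

/-- A witness for the occurrence of a length-3 pattern at three given increasing
positions, provided all six pairwise comparisons match. -/
lemma pat3_witness {n : ℕ} (π : Equiv.Perm (Fin n)) (x y z : ℕ) (a b c : Fin n)
    (hab : a < b) (hbc : b < c)
    (h01 : x < y ↔ π a < π b) (h10 : y < x ↔ π b < π a)
    (h02 : x < z ↔ π a < π c) (h20 : z < x ↔ π c < π a)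
    (h12 : y < z ↔ π b < π c) (h21 : z < y ↔ π c < π b) :
    ∃ f : Fin ([x, y, z].length) ↪o Fin n,
      ∀ i j : Fin ([x, y, z].length),
        [x, y, z].get i < [x, y, z].get j ↔ π (f i) < π (f j) := by
  refine ⟨OrderEmbedding.ofStrictMono (emb3fun a b c) ?_, ?_⟩
  · intro i j hij
    obtain ⟨iv, hiv⟩ := i
    obtain ⟨jv, hjv⟩ := j
    simp only [List.length_cons, List.length_nil] at hiv hjv
    interval_cases iv <;> interval_cases jv <;>
      first
      | exact hab
      | exact hbc
      | exact hab.trans hbc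
      | exact absurd hij (by simp [Fin.mk_lt_mk])
  · intro i j
    obtain ⟨iv, hiv⟩ := i
    obtain ⟨jv, hjv⟩ := j
    simp only [List.length_cons, List.length_nil] at hiv hjv
    interval_cases iv <;> interval_cases jv <;>
      first
      | exact h01 | exact h10 | exact h02 | exact h20 | exact h12 | exact h21
      | exact ⟨fun h => absurd h (lt_irrefl _), fun h => absurd h (lt_irrefl _)⟩

theorem form_of_avoid_12k_132_213 (n k : ℕ) (hn : 1 ≤ n) (hk : 2 ≤ k)
    (π : Equiv.Perm (Fin n))
    (h1 : AvoidsPat π ((List.range k).map (· + 1)))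
    (h2 : AvoidsPat π [1, 3, 2]) (h3 : AvoidsPat π [2, 1, 3])
    (p : Fin n) (hp : (π p : ℕ) = n - 1) :
    ∃ σ : Equiv.Perm (Fin (n - ((p : ℕ) + 1))),
      AvoidsPat σ ((List.range k).map (· + 1)) ∧ AvoidsPat σ [1, 3, 2] ∧
      AvoidsPat σ [2, 1, 3] ∧
      (∀ i : Fin n, (i : ℕ) ≤ (p : ℕ) → (π i : ℕ) = n - ((p : ℕ) + 1) + (i : ℕ)) ∧
      (∀ i : Fin n, (p : ℕ) < (i : ℕ) →
        ∀ hh : (i : ℕ) - ((p : ℕ) + 1) < n - ((p : ℕ) + 1),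
          (π i : ℕ) = (σ ⟨(i : ℕ) - ((p : ℕ) + 1), hh⟩ : ℕ)) := by
  -- π p is the maximum
  have hmax : ∀ i : Fin n, i ≠ p → (π i : ℕ) < n - 1 := by
    intro i hi
    have h1' : (π i : ℕ) < n := (π i).isLt
    have hne : (π i : ℕ) ≠ n - 1 := by
      intro h
      exact hi (π.injective (Fin.ext (by rw [h, hp])))
    omega
  -- prefix strictly increasing
  have hA : ∀ a b : Fin n, a < b → (b : ℕ) ≤ (p : ℕ) → π a < π b := by
    intro a b hab hbp
    by_contra hle
    push_neg at hle
    have hne : π b ≠ π a := fun h => (ne_of_lt hab) (π.injective h).symm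
    have hba : π b < π a := lt_of_le_of_ne hle hne
    have hbp' : b ≠ p := by
      intro h
      subst h
      have := hmax a (by intro h; rw [h] at hab; exact lt_irrefl _ hab)
      rw [Fin.lt_def, hp] at hba
      omega
    have hbltp : b < p := lt_of_le_of_ne (Fin.le_def.mpr hbp) hbp'
    have hanep : a ≠ p := by
      intro h; subst h
      exact absurd (lt_trans hab hbltp) (lt_irrefl _)
    have ha1 := hmax a hanep
    have hb1 := hmax b hbp'
    rw [Fin.lt_def] at hba
    exact h3 (pat3_witness π 2 1 3 a b p hab hbltp
      (by rw [Fin.lt_def]; omega) (by rw [Fin.lt_def]; omega)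
      (by rw [Fin.lt_def, hp]; omega) (by rw [Fin.lt_def, hp]; omega)
      (by rw [Fin.lt_def, hp]; omega) (by rw [Fin.lt_def, hp]; omega))
  -- suffix values below all prefix values
  have hB : ∀ c : Fin n, (p : ℕ) < (c : ℕ) → ∀ a : Fin n, (a : ℕ) ≤ (p : ℕ) →
      π c < π a := by
    intro c hc a ha
    have hcnep : c ≠ p := by
      intro h; subst h; exact absurd hc (lt_irrefl _)
    have hcmax := hmax c hcnep
    rcases eq_or_lt_of_le ha with h | h
    · have : a = p := Fin.ext h
      subst this
      rw [Fin.lt_def, hp]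
      omega
    · have haltp : a < p := Fin.lt_def.mpr h
      have hanep : a ≠ p := ne_of_lt haltp
      by_contra hle
      push_neg at hle
      have hne : π a ≠ π c := by
        intro hh
        have := π.injective hh
        subst this
        exact absurd (lt_trans haltp (Fin.lt_def.mpr hc)) (lt_irrefl _)
      have hac : π a < π c := lt_of_le_of_ne hle hne
      have ha1 := hmax a hanep
      rw [Fin.lt_def] at hac
      exact h2 (pat3_witness π 1 3 2 a p c haltp (Fin.lt_def.mpr hc)
        (by rw [Fin.lt_def, hp]; omega) (by rw [Fin.lt_def, hp]; omega)
        (by rw [Fin.lt_def]; omega) (by rw [Fin.lt_def]; omega)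
        (by rw [Fin.lt_def, hp]; omega) (by rw [Fin.lt_def, hp]; omega))
  -- exact values on the prefix
  have hC : ∀ i : Fin n, (i : ℕ) ≤ (p : ℕ) → (π i : ℕ) = n - ((p : ℕ) + 1) + (i : ℕ) := by
    intro i hi
    have hlow : n - 1 - (p : ℕ) + (i : ℕ) ≤ (π i : ℕ) := by
      have hsub : (Finset.Ioi p ∪ Finset.Iio i).image π ⊆ Finset.Iio (π i) := by
        intro x hx
        simp only [Finset.mem_image, Finset.mem_union, Finset.mem_Ioi, Finset.mem_Iio] at hx ⊢
        obtain ⟨y, hy, rfl⟩ := hx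
        rcases hy with hy | hy
        · exact hB y (Fin.lt_def.mp hy) i hi
        · exact hA y i hy hi
      have hcard := Finset.card_le_card hsub
      rw [Fin.card_Iio, Finset.card_image_of_injective _ π.injective,
        Finset.card_union_of_disjoint] at hcard
      · rw [Fin.card_Ioi, Fin.card_Iio] at hcard
        omega
      · rw [Finset.disjoint_left]
        intro x hx hx'
        simp only [Finset.mem_Ioi, Finset.mem_Iio] at hx hx'
        rw [Fin.lt_def] at hx hx'
        omega
    have hup : (p : ℕ) - (i : ℕ) ≤ n - 1 - (π i : ℕ) := by
      have hsub : (Finset.Ioc i p).image π ⊆ Finset.Ioi (π i) := by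
        intro x hx
        simp only [Finset.mem_image, Finset.mem_Ioc, Finset.mem_Ioi] at hx ⊢
        obtain ⟨y, ⟨hy1, hy2⟩, rfl⟩ := hx
        exact hA i y hy1 (Fin.le_def.mp hy2)
      have hcard := Finset.card_le_card hsub
      rw [Fin.card_Ioi, Finset.card_image_of_injective _ π.injective, Fin.card_Ioc] at hcard
      exact hcard
    have hpn : (p : ℕ) < n := p.isLt
    have hπn : (π i : ℕ) < n := (π i).isLt
    omega
  set m := n - ((p : ℕ) + 1) with hm
  have hpn : (p : ℕ) < n := p.isLt
  -- suffix values are below m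
  have hsuf : ∀ c : Fin n, (p : ℕ) < (c : ℕ) → (π c : ℕ) < m := by
    intro c hc
    have hz : ((⟨0, by omega⟩ : Fin n) : ℕ) ≤ (p : ℕ) := Nat.zero_le _
    have h1' := hB c hc ⟨0, by omega⟩ hz
    rw [Fin.lt_def] at h1'
    have h2' := hC ⟨0, by omega⟩ hz
    simp only at h2'
    omega
  have hshift : ∀ j : Fin m, (p : ℕ) + 1 + (j : ℕ) < n := by
    intro j
    have := j.isLt
    omega
  let g : Fin m → Fin m := fun j =>
    ⟨(π ⟨(p : ℕ) + 1 + (j : ℕ), hshift j⟩ : ℕ), hsuf _ (by simp only; omega)⟩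
  have hginj : Function.Injective g := by
    intro a b hab
    have h1' : ((π ⟨(p : ℕ) + 1 + (a : ℕ), hshift a⟩ : Fin n) : ℕ)
        = ((π ⟨(p : ℕ) + 1 + (b : ℕ), hshift b⟩ : Fin n) : ℕ) :=
      congrArg (Fin.val : Fin m → ℕ) hab
    have h2' := π.injective (Fin.ext h1')
    have h3' := congrArg Fin.val h2'
    simp only at h3'
    exact Fin.ext (by omega)
  let σ : Equiv.Perm (Fin m) := Equiv.ofBijective g (Finite.injective_iff_bijective.mp hginj)
  have hσval : ∀ j : Fin m, (σ j : ℕ) = (π ⟨(p : ℕ) + 1 + (j : ℕ), hshift j⟩ : ℕ) :=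
    fun j => rfl
  let sh : Fin m ↪o Fin n := OrderEmbedding.ofStrictMono
    (fun j => ⟨(p : ℕ) + 1 + (j : ℕ), hshift j⟩)
    (by intro a b hab; rw [Fin.lt_def] at hab ⊢; simpa using hab)
  have transfer : ∀ s : List ℕ, AvoidsPat π s → AvoidsPat σ s := by
    intro s hs hex
    obtain ⟨f, hf⟩ := hex
    apply hs
    refine ⟨f.trans sh, ?_⟩
    intro i j
    rw [hf i j]
    exact Iff.rfl
  refine ⟨σ, transfer _ h1, transfer _ h2, transfer _ h3, hC, ?_⟩
  intro i hi hh
  rw [hσval]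
  have heq : (⟨(p : ℕ) + 1 + ((i : ℕ) - ((p : ℕ) + 1)), hshift ⟨_, hh⟩⟩ : Fin n) = i :=
    Fin.ext (by simp only; omega)
  rw [heq]
end

section
/- Fix n ≥ 1, k ≥ 2, and 1 ≤ i ≤ k−1. For every permutation σ of [n−i] avoiding 12…k, 132, and 213, the permutation n−i+1, n−i+2, …, n, σ (with σ appended after the increasing run of the i largest values) is a permutation of [n] avoiding 12…k, 132, and 213. -/
/-!
The permutation `π` is the skew sum of the increasing run of length `i` and `σ`: its first `i`
values are the `i` largest ones, in increasing order. In an occurrence of `12…k`, `132` or `213`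
whose first entry lies in the run, every later entry above the first one lies in the run as
well, and the run is increasing; for `132` and `213` this contradicts the required descent,
and for `12…k` it puts all `k > i` entries in the run. So every occurrence lies inside `σ`.
-/

open Equiv

variable {n : ℕ}

def IsOccurrence (π : Perm (Fin n)) (s : List ℕ) (f : Fin s.length ↪o Fin n) : Prop :=
  ∀ a b : Fin s.length, s.get a < s.get b ↔ π (f a) < π (f b)

theorem avoidsPat_iff_forall_not_isOccurrence (π : Perm (Fin n)) (s : List ℕ) :
    AvoidsPat π s ↔ ∀ f, ¬ IsOccurrence π s f :=
  not_exists

structure PrependsRun (π : Perm (Fin n)) (i : ℕ) (σ : Perm (Fin (n - i))) : Prop where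
  val_apply_of_lt : ∀ j : Fin n, (j : ℕ) < i → (π j : ℕ) = n - i + j
  val_apply_of_le : ∀ j : Fin n, i ≤ (j : ℕ) → ∀ hh : (j : ℕ) - i < n - i,
    (π j : ℕ) = (σ ⟨(j : ℕ) - i, hh⟩ : ℕ)

namespace PrependsRun

variable {i : ℕ} {π : Perm (Fin n)} {σ : Perm (Fin (n - i))}

theorem val_apply_lt_of_le (hπ : PrependsRun π i σ) {j : Fin n} (hj : i ≤ (j : ℕ)) :
    (π j : ℕ) < n - i := by
  have hh : (j : ℕ) - i < n - i := by omega
  rw [hπ.val_apply_of_le j hj hh]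
  exact (σ _).isLt

theorem lt_of_apply_le (hπ : PrependsRun π i σ) {p r : Fin n} (hp : (p : ℕ) < i)
    (hpr : π p ≤ π r) : (r : ℕ) < i := by
  by_contra! hr
  have := hπ.val_apply_lt_of_le hr
  have := hπ.val_apply_of_lt p hp
  rw [Fin.le_def] at hpr
  omega

theorem apply_le_apply (hπ : PrependsRun π i σ) {p q : Fin n} (hpq : p ≤ q)
    (hq : (q : ℕ) < i) : π p ≤ π q := by
  rw [Fin.le_def, hπ.val_apply_of_lt p (by omega), hπ.val_apply_of_lt q hq]
  omega

theorem not_avoidsPat_of_isOccurrence (hπ : PrependsRun π i σ) {s : List ℕ}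
    {f : Fin s.length ↪o Fin n} (hf : IsOccurrence π s f) (hfi : ∀ j, i ≤ (f j : ℕ)) :
    ¬ AvoidsPat σ s := by
  have hlt (j : Fin s.length) : (f j : ℕ) - i < n - i := by have := hfi j; omega
  let g : Fin s.length ↪o Fin (n - i) :=
    OrderEmbedding.ofStrictMono (fun j => ⟨f j - i, hlt j⟩) fun a b hab => by
      have : (f a : ℕ) < f b := f.strictMono hab
      have := hfi a
      exact Fin.mk_lt_mk.mpr (by omega)
  have hσg (j : Fin s.length) : (σ (g j) : ℕ) = π (f j) :=
    (hπ.val_apply_of_le _ (hfi j) _).symm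
  refine not_not.mpr ⟨g, fun a b => ?_⟩
  rw [hf a b, Fin.lt_def, Fin.lt_def, hσg, hσg]

theorem avoidsPat_of_le_head (hπ : PrependsRun π i σ) {s : List ℕ} (hσ : AvoidsPat σ s)
    (hs : 0 < s.length) (h : ∀ f, IsOccurrence π s f → i ≤ (f ⟨0, hs⟩ : ℕ)) :
    AvoidsPat π s := by
  rw [avoidsPat_iff_forall_not_isOccurrence]
  intro f hf
  refine hπ.not_avoidsPat_of_isOccurrence hf (fun j => ?_) hσ
  exact (h f hf).trans (f.monotone (Fin.mk_le_mk.mpr j.val.zero_le))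

theorem le_head_of_isOccurrence_increasing (hπ : PrependsRun π i σ) {k : ℕ} (hik : i < k)
    {f : Fin ((List.range k).map (· + 1)).length ↪o Fin n}
    (hf : IsOccurrence π ((List.range k).map (· + 1)) f) :
    i ≤ (f ⟨0, by simpa using Nat.zero_lt_of_lt hik⟩ : ℕ) := by
  by_contra! h0
  have hrun (j) : (f j : ℕ) < i :=
    hπ.lt_of_apply_le h0 (not_lt.mp ((hf j _).not.mp (by simp)))
  have hki := Fin.le_of_embedding ⟨fun j => ⟨f j, hrun j⟩, fun a b hab =>
    f.injective (Fin.ext (Fin.mk.inj hab))⟩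
  exact hik.not_ge (by simpa using hki)

theorem le_head_of_isOccurrence_132 (hπ : PrependsRun π i σ)
    {f : Fin ([1, 3, 2] : List ℕ).length ↪o Fin n} (hf : IsOccurrence π [1, 3, 2] f) :
    i ≤ (f (0 : Fin 3) : ℕ) := by
  by_contra! h0
  have h2 := hπ.lt_of_apply_le h0 ((hf 0 2).mp (by decide)).le
  have h12 := hπ.apply_le_apply (f.monotone (by decide : (1 : Fin 3) ≤ 2)) h2
  exact not_lt.mpr h12 ((hf 2 1).mp (by decide))

theorem le_head_of_isOccurrence_213 (hπ : PrependsRun π i σ)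
    {f : Fin ([2, 1, 3] : List ℕ).length ↪o Fin n} (hf : IsOccurrence π [2, 1, 3] f) :
    i ≤ (f (0 : Fin 3) : ℕ) := by
  by_contra! h0
  have h2 := hπ.lt_of_apply_le h0 ((hf 0 2).mp (by decide)).le
  have h1 : (f 1 : ℕ) < i := lt_of_le_of_lt (f.monotone (by decide : (1 : Fin 3) ≤ 2)) h2
  have h01 := hπ.apply_le_apply (f.monotone (by decide : (0 : Fin 3) ≤ 1)) h1
  exact not_lt.mpr h01 ((hf 1 0).mp (by decide))

end PrependsRun

theorem prepend_run_avoids_12k_132_213_general (n k i : ℕ) (hk : 2 ≤ k)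
    (hik : i ≤ k - 1)
    (σ : Equiv.Perm (Fin (n - i)))
    (hσ1 : AvoidsPat σ ((List.range k).map (· + 1)))
    (hσ2 : AvoidsPat σ [1, 3, 2]) (hσ3 : AvoidsPat σ [2, 1, 3])
    (π : Equiv.Perm (Fin n))
    (hπ1 : ∀ j : Fin n, (j : ℕ) < i → (π j : ℕ) = n - i + (j : ℕ))
    (hπ2 : ∀ j : Fin n, i ≤ (j : ℕ) → ∀ hh : (j : ℕ) - i < n - i,
      (π j : ℕ) = (σ ⟨(j : ℕ) - i, hh⟩ : ℕ)) :
    AvoidsPat π ((List.range k).map (· + 1)) ∧ AvoidsPat π [1, 3, 2] ∧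
      AvoidsPat π [2, 1, 3] := by
  have hπ : PrependsRun π i σ := ⟨hπ1, hπ2⟩
  have hik_lt : i < k := by omega
  exact ⟨hπ.avoidsPat_of_le_head hσ1 _ fun _ => hπ.le_head_of_isOccurrence_increasing hik_lt,
    hπ.avoidsPat_of_le_head hσ2 _ fun _ => hπ.le_head_of_isOccurrence_132,
    hπ.avoidsPat_of_le_head hσ3 _ fun _ => hπ.le_head_of_isOccurrence_213⟩

theorem prepend_run_avoids_12k_132_213 (n k i : ℕ) (hn : 1 ≤ n) (hk : 2 ≤ k)
    (hi1 : 1 ≤ i) (hik : i ≤ k - 1)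
    (σ : Equiv.Perm (Fin (n - i)))
    (hσ1 : AvoidsPat σ ((List.range k).map (· + 1)))
    (hσ2 : AvoidsPat σ [1, 3, 2]) (hσ3 : AvoidsPat σ [2, 1, 3])
    (π : Equiv.Perm (Fin n))
    (hπ1 : ∀ j : Fin n, (j : ℕ) < i → (π j : ℕ) = n - i + (j : ℕ))
    (hπ2 : ∀ j : Fin n, i ≤ (j : ℕ) → ∀ hh : (j : ℕ) - i < n - i,
      (π j : ℕ) = (σ ⟨(j : ℕ) - i, hh⟩ : ℕ)) :
    AvoidsPat π ((List.range k).map (· + 1)) ∧ AvoidsPat π [1, 3, 2] ∧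
      AvoidsPat π [2, 1, 3] :=
  prepend_run_avoids_12k_132_213_general n k i hk hik σ hσ1 hσ2 hσ3 π hπ1 hπ2
end

section
/- Fix n ≥ 1 and k ≥ 2. Every permutation π of [n] avoiding 123, 132, and k−1 k−2 … 1 k has the form n−1, n−2, …, n−j+1, n, σ, where j = π^{-1}(n) and σ is a permutation of [n−j] avoiding 123, 132, and k−1 k−2 … 1 k. -/
-- key lemma
lemma key_lemma {n : ℕ} (π : Equiv.Perm (Fin n))
    (h1 : AvoidsPat π [1, 2, 3]) (h2 : AvoidsPat π [1, 3, 2])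
    (i j l : Fin n) (hij : i < j) (hjl : j < l)
    (h4 : π i < π j) (h5 : π i < π l) : False := by
  set v : Fin 3 → Fin n := fun a => if (a : ℕ) = 0 then i else if (a : ℕ) = 1 then j else l with hvdef
  have hij' : (i:ℕ) < j := hij
  have hjl' : (j:ℕ) < l := hjl
  have h4' : (π i : ℕ) < π j := h4
  have h5' : (π i : ℕ) < π l := h5
  have hv : StrictMono v := by
    intro a b hab
    have hab' : (a:ℕ) < b := hab
    obtain ⟨a, ha⟩ := a; obtain ⟨b, hb⟩ := b
    simp only [hvdef, Fin.lt_def]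
    interval_cases a <;> interval_cases b <;> norm_num <;> omega
  rcases lt_trichotomy (π j) (π l) with hc | hc | hc
  · have hc' : (π j : ℕ) < π l := hc
    refine h1 ⟨OrderEmbedding.ofStrictMono v hv, ?_⟩
    intro a b
    obtain ⟨a, ha⟩ := a; obtain ⟨b, hb⟩ := b
    have ha' : a < 3 := ha
    have hb' : b < 3 := hb
    simp only [OrderEmbedding.coe_ofStrictMono, hvdef, Fin.lt_def]
    interval_cases a <;> interval_cases b <;> norm_num [List.get] <;> omega
  · exact absurd (π.injective hc) hjl.ne
  · have hc' : (π l : ℕ) < π j := hc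
    refine h2 ⟨OrderEmbedding.ofStrictMono v hv, ?_⟩
    intro a b
    obtain ⟨a, ha⟩ := a; obtain ⟨b, hb⟩ := b
    have ha' : a < 3 := ha
    have hb' : b < 3 := hb
    simp only [OrderEmbedding.coe_ofStrictMono, hvdef, Fin.lt_def]
    interval_cases a <;> interval_cases b <;> norm_num [List.get] <;> omega

-- transfer lemma: suffix permutation avoids whatever π avoids
lemma transfer_lemma {n N : ℕ} (π : Equiv.Perm (Fin n)) (σ : Equiv.Perm (Fin N))
    (e : Fin N ↪o Fin n) (he : ∀ m : Fin N, (π (e m) : ℕ) = (σ m : ℕ))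
    (s : List ℕ) (h : AvoidsPat π s) : AvoidsPat σ s := by
  rintro ⟨f, hf⟩
  refine h ⟨f.trans e, ?_⟩
  intro a b
  rw [hf a b]
  simp only [RelEmbedding.coe_trans, Function.comp_apply, Fin.lt_def, he]

theorem form_of_avoid_123_132_desc_k (n k : ℕ) (hn : 1 ≤ n) (hk : 2 ≤ k)
    (π : Equiv.Perm (Fin n))
    (h1 : AvoidsPat π [1, 2, 3]) (h2 : AvoidsPat π [1, 3, 2])
    (h3 : AvoidsPat π (((List.range (k - 1)).reverse.map (· + 1)) ++ [k]))
    (p : Fin n) (hp : (π p : ℕ) = n - 1) :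
    ∃ σ : Equiv.Perm (Fin (n - ((p : ℕ) + 1))),
      AvoidsPat σ [1, 2, 3] ∧ AvoidsPat σ [1, 3, 2] ∧
      AvoidsPat σ (((List.range (k - 1)).reverse.map (· + 1)) ++ [k]) ∧
      (∀ i : Fin n, (i : ℕ) < (p : ℕ) → (π i : ℕ) = n - 2 - (i : ℕ)) ∧
      (∀ i : Fin n, (p : ℕ) < (i : ℕ) →
        ∀ hh : (i : ℕ) - ((p : ℕ) + 1) < n - ((p : ℕ) + 1),
          (π i : ℕ) = (σ ⟨(i : ℕ) - ((p : ℕ) + 1), hh⟩ : ℕ)) := by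
  have hpn : (p : ℕ) < n := p.isLt
  -- claim A
  have A : ∀ i j : Fin n, (i : ℕ) < p → i < j → j ≠ p → (π j : ℕ) < π i := by
    intro i j hi hij hjp
    by_contra hcon
    push_neg at hcon
    have hne : π i ≠ π j := fun h => absurd (π.injective h) hij.ne
    have hιj : (π i : ℕ) < π j := lt_of_le_of_ne hcon (fun h => hne (Fin.ext h))
    have hip : i ≠ p := fun h => by simp [h] at hi
    have hιp : (π i : ℕ) < π p := by
      have : (π i : ℕ) ≠ n - 1 := fun h => hip (π.injective (Fin.ext (by rw [h, hp])))
      have := (π i).isLt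
      omega
    rcases lt_trichotomy (j : ℕ) p with hc | hc | hc
    · exact key_lemma π h1 h2 i j p hij hc hιj hιp
    · exact hjp (Fin.ext hc)
    · exact key_lemma π h1 h2 i p j hi hc hιp hιj
  -- prefix values
  have B : ∀ m : ℕ, (hm : m < (p : ℕ)) → (π ⟨m, lt_trans hm hpn⟩ : ℕ) = n - 2 - m := by
    intro m
    induction m using Nat.strong_induction_on with
    | _ m IH =>
      intro hm
      have hmn : m < n := lt_trans hm hpn
      set i : Fin n := ⟨m, hmn⟩ with hidef
      have hipne : i ≠ p := fun h => by simp [hidef, Fin.ext_iff] at h; omega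
      have hub : (π i : ℕ) ≤ n - 2 - m := by
        match m, hm with
        | 0, hm =>
          have : (π i : ℕ) ≠ n - 1 := fun h => hipne (π.injective (Fin.ext (by rw [h, hp])))
          have := (π i).isLt
          omega
        | m' + 1, hm =>
          have h1' := IH m' (by omega) (by omega)
          have h2' : (π i : ℕ) < π ⟨m', lt_trans (by omega) hpn⟩ := by
            refine A _ _ (by simp; omega) ?_ hipne
            simp [hidef, Fin.lt_def]
          omega
      -- now the position of n-2-m must be i
      have hvlt : n - 2 - m < n := by omega
      set j : Fin n := π.symm ⟨n - 2 - m, hvlt⟩ with hjdef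
      have hπj : (π j : ℕ) = n - 2 - m := by simp [hjdef]
      have hjp : j ≠ p := by
        intro h
        rw [h, hp] at hπj
        omega
      have hji : j = i := by
        rcases lt_trichotomy (j : ℕ) m with hc | hc | hc
        · have := IH j hc (lt_trans hc hm)
          have hj' : (⟨(j : ℕ), lt_trans (lt_trans hc hm) hpn⟩ : Fin n) = j := Fin.ext rfl
          rw [hj'] at this
          rw [hπj] at this
          omega
        · exact Fin.ext hc
        · have := A i j (by simpa [hidef] using hm) (by simp [hidef, Fin.lt_def, hc]) hjp
          omega
      rw [← hji, hπj]
  have B' : ∀ i : Fin n, (i : ℕ) < (p : ℕ) → (π i : ℕ) = n - 2 - (i : ℕ) := by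
    intro i hi
    have : (⟨(i : ℕ), lt_trans hi hpn⟩ : Fin n) = i := Fin.ext rfl
    rw [← this]; exact B i hi
  -- suffix values are small
  have C : ∀ j : Fin n, (p : ℕ) < (j : ℕ) → (π j : ℕ) < n - ((p : ℕ) + 1) := by
    intro j hj
    by_contra hcon
    push_neg at hcon
    have hjn := j.isLt
    have hπjn := (π j).isLt
    have hjp : j ≠ p := fun h => by simp [h] at hj
    have hne : (π j : ℕ) ≠ n - 1 := by
      intro h
      exact hjp (π.injective (Fin.ext (by rw [h, hp])))
    set i : ℕ := n - 2 - (π j : ℕ) with hidef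
    have hip : i < (p : ℕ) := by omega
    have := B i hip
    have : π ⟨i, lt_trans hip hpn⟩ = π j := Fin.ext (by omega)
    have := π.injective this
    simp [Fin.ext_iff] at this
    omega
  -- build σ
  set N := n - ((p : ℕ) + 1) with hNdef
  have hbnd : ∀ m : Fin N, (p : ℕ) + 1 + (m : ℕ) < n := by
    intro m; have := m.isLt; omega
  set g : Fin N → Fin N := fun m =>
    ⟨(π ⟨(p : ℕ) + 1 + (m : ℕ), hbnd m⟩ : ℕ), C _ (by simp; omega)⟩ with hgdef
  have hginj : Function.Injective g := by
    intro a b hab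
    simp only [hgdef, Fin.mk.injEq] at hab
    have := π.injective (Fin.ext hab)
    simp [Fin.ext_iff] at this
    exact Fin.ext (by omega)
  have hgbij : Function.Bijective g := Finite.injective_iff_bijective.mp hginj
  set σ : Equiv.Perm (Fin N) := Equiv.ofBijective g hgbij with hσdef
  have hσval : ∀ m : Fin N, (σ m : ℕ) = (π ⟨(p : ℕ) + 1 + (m : ℕ), hbnd m⟩ : ℕ) := by
    intro m; simp [hσdef, Equiv.ofBijective_apply, hgdef]
  -- embedding
  have hemono : StrictMono (fun m : Fin N => (⟨(p : ℕ) + 1 + (m : ℕ), hbnd m⟩ : Fin n)) := by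
    intro a b hab
    simp only [Fin.lt_def] at *
    omega
  set e : Fin N ↪o Fin n := OrderEmbedding.ofStrictMono _ hemono with hedef
  have he : ∀ m : Fin N, (π (e m) : ℕ) = (σ m : ℕ) := by
    intro m
    rw [hσval m]
    rfl
  refine ⟨σ, transfer_lemma π σ e he _ h1, transfer_lemma π σ e he _ h2,
    transfer_lemma π σ e he _ h3, B', ?_⟩
  intro i hi hh
  have : (⟨(p : ℕ) + 1 + ((i : ℕ) - ((p : ℕ) + 1)), hbnd ⟨(i : ℕ) - ((p : ℕ) + 1), hh⟩⟩ : Fin n) = i :=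
    Fin.ext (by simp; omega)
  rw [hσval ⟨(i : ℕ) - ((p : ℕ) + 1), hh⟩, this]
end

section
/- For all n ≥ 1 and k ≥ 2, no permutation π of [n] avoiding 123, 132, and k−1 k−2 … 1 k satisfies π^{-1}(n) ≥ k. -/
theorem avoid_123_132_desc_k_position_bound (n k : ℕ) (hn : 1 ≤ n) (hk : 2 ≤ k)
    (π : Equiv.Perm (Fin n))
    (h1 : AvoidsPat π [1, 2, 3]) (h2 : AvoidsPat π [1, 3, 2])
    (h3 : AvoidsPat π (((List.range (k - 1)).reverse.map (· + 1)) ++ [k]))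
    (p : Fin n) (hp : (π p : ℕ) = n - 1) :
    ¬ k ≤ (p : ℕ) + 1 := by
  intro hkp
  have hm1 : 1 ≤ k - 1 := by omega
  have hpm : k - 1 ≤ (p : ℕ) := by omega
  have hpn : (p : ℕ) < n := p.isLt
  -- the maximum value is at p
  have hmax : ∀ q : Fin n, q ≠ p → (π q : ℕ) < n - 1 := by
    intro q hq
    have h1' : (π q : ℕ) < n := (π q).isLt
    have h2' : π q ≠ π p := fun h => hq (π.injective h)
    have h3' : (π q : ℕ) ≠ n - 1 := by
      rw [← hp]; exact fun h => h2' (Fin.ext h)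
    omega
  -- values before p are strictly decreasing
  have hdec : ∀ a b : Fin n, a < b → b < p → (π b : ℕ) < (π a : ℕ) := by
    intro a b hab hbp
    by_contra hcon
    push_neg at hcon
    have hne : (π a : ℕ) ≠ (π b : ℕ) := by
      intro h
      exact absurd (π.injective (Fin.ext h)) (Fin.ne_of_lt hab)
    have hab' : (π a : ℕ) < (π b : ℕ) := lt_of_le_of_ne hcon hne
    have hbn : (π b : ℕ) < n - 1 := hmax b (Fin.ne_of_lt hbp)
    have han : (π a : ℕ) < n - 1 := by omega
    have hap : a < p := hab.trans hbp
    have fab : π a < π b := Fin.lt_def.mpr hab'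
    have fap : π a < π p := Fin.lt_def.mpr (by rw [hp]; exact han)
    have fbp : π b < π p := Fin.lt_def.mpr (by rw [hp]; exact hbn)
    apply h1
    set g : Fin 3 → Fin n :=
      fun i => if (i : ℕ) = 0 then a else if (i : ℕ) = 1 then b else p with hgdef
    have hg : StrictMono g := by
      intro i j hij
      fin_cases i <;> fin_cases j <;>
        first
          | exact absurd hij (by decide)
          | exact hab
          | exact hap
          | exact hbp
    have hπg : StrictMono (fun i => π (g i)) := by
      intro i j hij
      fin_cases i <;> fin_cases j <;>
        first
          | exact absurd hij (by decide)
          | exact fab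
          | exact fap
          | exact fbp
    have hs : StrictMono (fun i : Fin 3 => ([1, 2, 3] : List ℕ).get i) := by decide
    refine ⟨OrderEmbedding.ofStrictMono g hg, fun i j => ⟨fun h => ?_, fun h => ?_⟩⟩
    · exact hπg (hs.lt_iff_lt.mp h)
    · exact hs (hπg.lt_iff_lt.mp h)
  -- now build an occurrence of the forbidden pattern
  apply h3
  have hslen : (((List.range (k - 1)).reverse.map (· + 1)) ++ [k]).length = (k - 1) + 1 := by
    simp
  have hsget : ∀ i : Fin (((List.range (k - 1)).reverse.map (· + 1)) ++ [k]).length,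
      (((List.range (k - 1)).reverse.map (· + 1)) ++ [k]).get i =
        if (i : ℕ) < k - 1 then k - 1 - i else k := by
    intro i
    have hi : (i : ℕ) < (k - 1) + 1 := hslen ▸ i.isLt
    rw [List.get_eq_getElem]
    by_cases h : (i : ℕ) < k - 1
    · rw [List.getElem_append_left (by simpa using h)]
      rw [List.getElem_map, List.getElem_reverse]
      simp only [List.getElem_range]
      rw [if_pos h]
      simp only [List.length_range]
      omega
    · have him : (i : ℕ) = k - 1 := by omega
      rw [List.getElem_append_right (by simpa using Nat.le_of_eq him.symm)]
      simp [him, if_neg h]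
  have hfn : ∀ i : Fin (((List.range (k - 1)).reverse.map (· + 1)) ++ [k]).length,
      (i : ℕ) < k - 1 → (i : ℕ) < n := fun i h => by omega
  set g : Fin (((List.range (k - 1)).reverse.map (· + 1)) ++ [k]).length → Fin n :=
    fun i => if h : (i : ℕ) < k - 1 then ⟨(i : ℕ), hfn i h⟩ else p with hgdef
  have hgval : ∀ (i : Fin (((List.range (k - 1)).reverse.map (· + 1)) ++ [k]).length)
      (h : (i : ℕ) < k - 1), g i = ⟨(i : ℕ), hfn i h⟩ := by
    intro i h; rw [hgdef]; exact dif_pos h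
  have hgval' : ∀ (i : Fin (((List.range (k - 1)).reverse.map (· + 1)) ++ [k]).length),
      ¬ (i : ℕ) < k - 1 → g i = p := by
    intro i h; rw [hgdef]; exact dif_neg h
  have hg : StrictMono g := by
    intro i j hij
    have hij' : (i : ℕ) < (j : ℕ) := hij
    have hj : (j : ℕ) < (k - 1) + 1 := hslen ▸ j.isLt
    by_cases hjm : (j : ℕ) < k - 1
    · have him : (i : ℕ) < k - 1 := by omega
      rw [hgval i him, hgval j hjm]
      exact Fin.mk_lt_mk.mpr hij'
    · have him : (i : ℕ) < k - 1 := by omega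
      rw [hgval i him, hgval' j hjm]
      exact Fin.lt_def.mpr (show (i : ℕ) < (p : ℕ) by omega)
  refine ⟨OrderEmbedding.ofStrictMono g hg, fun i j => ?_⟩
  show _ < _ ↔ π (g i) < π (g j)
  rw [hsget i, hsget j]
  have hi : (i : ℕ) < (k - 1) + 1 := hslen ▸ i.isLt
  have hj : (j : ℕ) < (k - 1) + 1 := hslen ▸ j.isLt
  by_cases him : (i : ℕ) < k - 1 <;> by_cases hjm : (j : ℕ) < k - 1
  · rw [if_pos him, if_pos hjm, hgval i him, hgval j hjm]
    have hilt : (⟨(i : ℕ), hfn i him⟩ : Fin n) < p :=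
      Fin.lt_def.mpr (show (i : ℕ) < (p : ℕ) by omega)
    have hjlt : (⟨(j : ℕ), hfn j hjm⟩ : Fin n) < p :=
      Fin.lt_def.mpr (show (j : ℕ) < (p : ℕ) by omega)
    rcases lt_trichotomy (i : ℕ) (j : ℕ) with h | h | h
    · have := hdec ⟨(i : ℕ), hfn i him⟩ ⟨(j : ℕ), hfn j hjm⟩ (Fin.mk_lt_mk.mpr h) hjlt
      rw [Fin.lt_def]
      constructor <;> intro hc <;> omega
    · have heq : (⟨(i : ℕ), hfn i him⟩ : Fin n) = ⟨(j : ℕ), hfn j hjm⟩ := by simp [h]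
      rw [heq]
      constructor <;> intro hc
      · omega
      · exact absurd hc (lt_irrefl _)
    · have := hdec ⟨(j : ℕ), hfn j hjm⟩ ⟨(i : ℕ), hfn i him⟩ (Fin.mk_lt_mk.mpr h) hilt
      rw [Fin.lt_def]
      constructor <;> intro hc <;> omega
  · rw [if_pos him, if_neg hjm, hgval i him, hgval' j hjm]
    have hne : (⟨(i : ℕ), hfn i him⟩ : Fin n) ≠ p := by
      intro h
      have : (i : ℕ) = (p : ℕ) := by simpa using congrArg Fin.val h
      omega
    have := hmax _ hne
    rw [Fin.lt_def]
    constructor <;> intro hc <;> omega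
  · rw [if_neg him, if_pos hjm, hgval' i him, hgval j hjm]
    have hne : (⟨(j : ℕ), hfn j hjm⟩ : Fin n) ≠ p := by
      intro h
      have : (j : ℕ) = (p : ℕ) := by simpa using congrArg Fin.val h
      omega
    have := hmax _ hne
    rw [Fin.lt_def]
    constructor <;> intro hc <;> omega
  · rw [if_neg him, if_neg hjm, hgval' i him, hgval' j hjm]
    constructor <;> intro hc
    · omega
    · exact absurd hc (lt_irrefl _)
end

section
/- For all n ≥ 1 and k ≥ 2, there is a bijection between the set of permutations of [n] avoiding 12…k, 132, and 213 and the set of tilings of a 1×n rectangle with tiles of sizes 1×1 through 1×(k−1). -/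
/-!
Call a weak ascent of `π` (positions `i ≤ j` with `π i ≤ π j`) rigid if `π j - π i = j - i`.
A permutation avoids `132` and `213` exactly when all its weak ascents are rigid: the positions
strictly between `i` and `j` are then mapped onto the values strictly between `π i` and `π j`,
and counting both sides gives rigidity. A permutation with rigid ascents is a concatenation of
blocks of consecutive increasing values, each block lying below the previous one; reading off
the block lengths is a bijection with compositions of `n`. Given rigidity, an occurrence of
`12…k` is the same as an ascent spanning `k - 1` positions, i.e. a block of length at least `k`.
-/

theorem Fin.val_sub_le_of_orderEmbedding {m n : ℕ} (f : Fin m ↪o Fin n) {i j : Fin m}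
    (hij : i ≤ j) : (j : ℕ) - i ≤ f j - f i := by
  have hsub : (Finset.Icc i j).map f.toEmbedding ⊆ Finset.Icc (f i) (f j) := by
    intro x hx
    obtain ⟨p, hp, rfl⟩ := Finset.mem_map.1 hx
    simpa using hp
  have := Finset.card_le_card hsub
  rw [Finset.card_map, Fin.card_Icc, Fin.card_Icc] at this
  have := Fin.le_def.1 (f.le_iff_le.2 hij)
  omega

namespace PermPattern

def AllAscents (Q : ℕ → ℕ → Prop) (L : List ℕ) : Prop :=
  ∀ i j (hi : i < L.length) (hj : j < L.length), i ≤ j → L[i] ≤ L[j] → Q (j - i) (L[j] - L[i])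

section AllAscents

variable {Q : ℕ → ℕ → Prop}

theorem allAscents_and {R : ℕ → ℕ → Prop} {L : List ℕ} :
    AllAscents (fun d e => Q d e ∧ R d e) L ↔ AllAscents Q L ∧ AllAscents R L :=
  ⟨fun h => ⟨fun i j hi hj hij hle => (h i j hi hj hij hle).1,
    fun i j hi hj hij hle => (h i j hi hj hij hle).2⟩,
   fun h i j hi hj hij hle => ⟨h.1 i j hi hj hij hle, h.2 i j hi hj hij hle⟩⟩

theorem allAscents_append_iff {A B : List ℕ} (hAB : ∀ x ∈ A, ∀ y ∈ B, y < x) :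
    AllAscents Q (A ++ B) ↔ AllAscents Q A ∧ AllAscents Q B := by
  refine ⟨fun h => ⟨fun i j hi hj hij hle => ?_, fun i j hi hj hij hle => ?_⟩, ?_⟩
  · have := h i j (by simp; omega) (by simp; omega) hij
    simp only [List.getElem_append_left hi, List.getElem_append_left hj] at this
    exact this hle
  · have := h (A.length + i) (A.length + j) (by simp; omega) (by simp; omega) (by omega)
    simp only [List.getElem_append_right (Nat.le_add_right _ _), Nat.add_sub_cancel_left,
      Nat.add_sub_add_left] at this
    exact this hle
  · rintro ⟨hA, hB⟩ i j hi hj hij hle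
    by_cases hjA : j < A.length
    · simp only [List.getElem_append_left hjA, List.getElem_append_left (hij.trans_lt hjA)]
        at hle ⊢
      exact hA i j _ hjA hij hle
    by_cases hiA : i < A.length
    · rw [List.getElem_append_left hiA, List.getElem_append_right (not_lt.1 hjA)] at hle
      exact absurd hle (not_le.2 (hAB _ (List.getElem_mem _) _ (List.getElem_mem _)))
    · simp only [List.getElem_append_right (not_lt.1 hjA),
        List.getElem_append_right (not_lt.1 hiA)] at hle ⊢
      simpa [show j - i = (j - A.length) - (i - A.length) by omega] using
        hB _ _ _ _ (by omega) hle

theorem allAscents_range'_iff {s a : ℕ} : AllAscents Q (List.range' s a) ↔ ∀ d < a, Q d d := by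
  refine ⟨fun h d hd => ?_, fun h i j _ hj hij _ => ?_⟩
  · have := h 0 d (by simp; omega) (by simpa using hd) d.zero_le (by simp)
    simpa only [List.getElem_range', Nat.add_sub_add_left, one_mul, mul_zero, Nat.sub_zero]
      using this
  · simp only [List.getElem_range', one_mul, Nat.add_sub_add_left]
    exact h _ (by simp at hj; omega)

end AllAscents

/-- `reverseLayered [a₁, …, aₘ]` cuts `[0, a₁ + ⋯ + aₘ)` into increasing runs of consecutive
values of lengths `a₁, …, aₘ`, the first run taking the largest values; for instance
`reverseLayered [2, 1, 3] = [4, 5, 3, 0, 1, 2]`. -/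
def reverseLayered : List ℕ → List ℕ
  | [] => []
  | a :: t => List.range' t.sum a ++ reverseLayered t

@[simp]
theorem length_reverseLayered (l : List ℕ) : (reverseLayered l).length = l.sum := by
  induction l with
  | nil => rfl
  | cons a t ih => simp [reverseLayered, ih]

theorem reverseLayered_perm_range (l : List ℕ) : (reverseLayered l).Perm (List.range l.sum) := by
  induction l with
  | nil => simp [reverseLayered]
  | cons a t ih =>
    rw [reverseLayered, List.sum_cons, Nat.add_comm, List.range_eq_range', ← List.range'_append,
      ← List.range_eq_range']
    simpa using List.perm_append_comm.trans (ih.append_right _)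

theorem lt_sum_of_mem_reverseLayered {l : List ℕ} {y : ℕ} (hy : y ∈ reverseLayered l) :
    y < l.sum :=
  List.mem_range.1 ((reverseLayered_perm_range l).mem_iff.1 hy)

theorem allAscents_reverseLayered_iff {Q : ℕ → ℕ → Prop} {l : List ℕ} :
    AllAscents Q (reverseLayered l) ↔ ∀ x ∈ l, ∀ d < x, Q d d := by
  induction l with
  | nil => simp [reverseLayered, AllAscents]
  | cons a t ih =>
    rw [reverseLayered, allAscents_append_iff, allAscents_range'_iff, ih, List.forall_mem_cons]
    intro x hx y hy
    have := lt_sum_of_mem_reverseLayered hy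
    simp only [List.mem_range'_1] at hx
    omega

theorem reverseLayered_injOn : Set.InjOn reverseLayered {l | ∀ x ∈ l, 0 < x} := by
  intro l₁ h₁ l₂ h₂ heq
  induction l₁ generalizing l₂ with
  | nil =>
    cases l₂ with
    | nil => rfl
    | cons b t => simp_all [reverseLayered]
  | cons a t ih =>
    cases l₂ with
    | nil => simp_all [reverseLayered]
    | cons b t' =>
      simp only [Set.mem_ofPred_eq, List.forall_mem_cons] at h₁ h₂
      obtain ⟨a, rfl⟩ := Nat.exists_eq_add_one.2 h₁.1
      obtain ⟨b, rfl⟩ := Nat.exists_eq_add_one.2 h₂.1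
      have hlen := congrArg List.length heq
      simp only [reverseLayered, List.range'_succ, List.cons_append, List.cons.injEq] at heq
      obtain ⟨hsum, heq⟩ := heq
      simp only [reverseLayered, List.length_append, List.length_range', length_reverseLayered]
        at hlen
      obtain rfl : a = b := by omega
      rw [hsum] at heq
      rw [ih h₁.2 h₂.2 (List.append_cancel_left heq)]

theorem take_eq_range'_of_allAscents {n : ℕ} {L : List ℕ} (hL : L.Perm (List.range n))
    (hR : AllAscents (· = ·) L) (h0 : 0 < L.length) :
    L.take (n - L[0]) = List.range' L[0] (n - L[0]) := by
  have hlen : L.length = n := by simpa using hL.length_eq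
  refine List.ext_getElem (by simp; omega) fun i hi _ => ?_
  simp only [List.length_take] at hi
  obtain ⟨m, hm, hLm⟩ :=
    List.getElem_of_mem (hL.mem_iff.2 (List.mem_range.2 (by omega : L[0] + i < n)))
  have := hR 0 m h0 hm m.zero_le (by omega)
  simp only [List.getElem_take, List.getElem_range', one_mul]
  obtain rfl : m = i := by omega
  exact hLm

theorem exists_reverseLayered_eq {n : ℕ} {L : List ℕ} (hL : L.Perm (List.range n))
    (hR : AllAscents (· = ·) L) : ∃ l, (∀ x ∈ l, 0 < x) ∧ reverseLayered l = L := by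
  induction n using Nat.strong_induction_on generalizing L with
  | _ n ih =>
  have hlen : L.length = n := by simpa using hL.length_eq
  rcases Nat.eq_zero_or_pos n with rfl | hn
  · exact ⟨[], by simp, by simp_all [reverseLayered]⟩
  set v := L[0]'(by omega)
  have hv : v < n := List.mem_range.1 (hL.mem_iff.1 (List.getElem_mem _))
  have hsplit : L = List.range' v (n - v) ++ L.drop (n - v) := by
    rw [← take_eq_range'_of_allAscents hL hR, List.take_append_drop]
  have hdrop : (L.drop (n - v)).Perm (List.range v) := by
    rw [← List.perm_append_left_iff (List.range' v (n - v)), ← hsplit]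
    refine hL.trans (List.Perm.trans (List.Perm.of_eq ?_) List.perm_append_comm)
    have := (List.range'_append_1 (s := 0) (m := v) (n := n - v)).symm
    rwa [Nat.zero_add, Nat.add_sub_cancel' hv.le, ← List.range_eq_range', ← List.range_eq_range']
      at this
  have hRdrop : AllAscents (· = ·) (L.drop (n - v)) := by
    rw [hsplit, allAscents_append_iff] at hR
    · exact hR.2
    · intro x hx y hy
      have := List.mem_range.1 (hdrop.mem_iff.1 hy)
      simp only [List.mem_range'_1] at hx
      omega
  obtain ⟨l, hpos, hl⟩ := ih v hv hdrop hRdrop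
  have hsum : l.sum = v := by
    have := congrArg List.length hl
    simp only [length_reverseLayered, List.length_drop, hlen] at this
    omega
  refine ⟨(n - v) :: l, List.forall_mem_cons.2 ⟨by omega, hpos⟩, ?_⟩
  rw [reverseLayered, hl, hsum, ← hsplit]

theorem forall_mem_pos_le_iff_allAscents_reverseLayered {K : ℕ} {l : List ℕ} :
    (∀ x ∈ l, 1 ≤ x ∧ x ≤ K) ↔
      (∀ x ∈ l, 0 < x) ∧ AllAscents (fun d e => d = e ∧ d < K) (reverseLayered l) := by
  rw [allAscents_reverseLayered_iff, ← forall₂_and]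
  refine forall₂_congr fun x _ => ⟨fun h => ⟨h.1, fun d hd => ⟨rfl, by omega⟩⟩, fun h => ?_⟩
  have := (h.2 (x - 1) (by omega)).2
  omega

noncomputable def reverseLayeredEquiv (n K : ℕ) :
    {l : List ℕ // l.sum = n ∧ ∀ x ∈ l, 1 ≤ x ∧ x ≤ K} ≃
      {L : List ℕ // L.Perm (List.range n) ∧ AllAscents (fun d e => d = e ∧ d < K) L} :=
  have hparts (l : List ℕ) := forall_mem_pos_le_iff_allAscents_reverseLayered (K := K) (l := l)
  Equiv.ofBijective
    (fun l => ⟨reverseLayered l.1, by simpa only [l.2.1] using reverseLayered_perm_range l.1,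
      ((hparts l.1).1 l.2.2).2⟩)
    ⟨fun l₁ l₂ h => Subtype.ext <| reverseLayered_injOn ((hparts _).1 l₁.2.2).1
        ((hparts _).1 l₂.2.2).1 (congrArg Subtype.val h),
      fun L => by
        obtain ⟨l, hpos, hl⟩ := exists_reverseLayered_eq L.2.1 (allAscents_and.1 L.2.2).1
        refine ⟨⟨l, ?_, (hparts l).2 ⟨hpos, hl ▸ L.2.2⟩⟩, Subtype.ext hl⟩
        simpa [← hl] using L.2.1.length_eq⟩

section Perm

variable {n : ℕ} {π : Equiv.Perm (Fin n)}

def oneLine (π : Equiv.Perm (Fin n)) : List ℕ := List.ofFn fun i => (π i : ℕ)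

theorem oneLine_perm_range (π : Equiv.Perm (Fin n)) : (oneLine π).Perm (List.range n) := by
  refine (List.perm_ext_iff_of_nodup ?_ List.nodup_range).2 fun x => ?_
  · exact List.nodup_ofFn.2 (Fin.val_injective.comp π.injective)
  · simp only [oneLine, List.mem_ofFn, List.mem_range]
    exact ⟨by rintro ⟨i, rfl⟩; exact (π i).isLt, fun hx => ⟨π.symm ⟨x, hx⟩, by simp⟩⟩

noncomputable def permEquivPermRange (n : ℕ) :
    Equiv.Perm (Fin n) ≃ {L : List ℕ // L.Perm (List.range n)} where
  toFun π := ⟨oneLine π, oneLine_perm_range π⟩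
  invFun L :=
    have hlen : L.1.length = n := by simpa using L.2.length_eq
    Equiv.ofBijective (fun i => ⟨L.1[i], List.mem_range.1 (L.2.mem_iff.1 (List.getElem_mem _))⟩)
      (Finite.injective_iff_bijective.1 fun i j hij => Fin.ext <|
        (L.2.nodup_iff.2 List.nodup_range).getElem_inj_iff.1 (congrArg Fin.val hij))
  left_inv π := by ext; simp [oneLine]
  right_inv L := Subtype.ext <| List.ext_getElem (by simpa [oneLine] using L.2.length_eq.symm)
    fun i _ _ => by simp [oneLine]

theorem allAscents_oneLine_iff {Q : ℕ → ℕ → Prop} :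
    AllAscents Q (oneLine π) ↔
      ∀ i j : Fin n, i ≤ j → π i ≤ π j → Q ((j : ℕ) - i) ((π j : ℕ) - π i) := by
  simp only [AllAscents, oneLine, List.getElem_ofFn, List.length_ofFn, Fin.forall_iff, Fin.le_def]
  exact ⟨fun h i hi j hj => h i j hi hj, fun h i j hi hj => h i hi j hj⟩

def tripleEmbedding {a b c : Fin n} (hab : a < b) (hbc : b < c) : Fin 3 ↪o Fin n :=
  OrderEmbedding.ofStrictMono ![a, b, c] <| Fin.strictMono_iff_lt_succ.2 fun i => by
    fin_cases i <;> assumption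

theorem avoidsPat_132_iff :
    AvoidsPat π [1, 3, 2] ↔ ∀ a b c : Fin n, a < b → b < c → π a < π c → π b < π c := by
  refine ⟨fun h a b c hab hbc hac => ?_, fun h ⟨f, hf⟩ => ?_⟩
  · by_contra hcb
    have hcb : π c < π b := lt_of_le_of_ne (not_lt.1 hcb) (π.injective.ne hbc.ne')
    refine h ⟨tripleEmbedding hab hbc, fun p q => ?_⟩
    fin_cases p <;> fin_cases q <;> simp [tripleEmbedding] <;> order
  · have := h (f 0) (f 1) (f 2) (f.lt_iff_lt.2 (by decide)) (f.lt_iff_lt.2 (by decide))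
      ((hf 0 2).1 (by decide))
    exact lt_asymm this ((hf 2 1).1 (by decide))

theorem avoidsPat_213_iff :
    AvoidsPat π [2, 1, 3] ↔ ∀ a b c : Fin n, a < b → b < c → π a < π c → π a < π b := by
  refine ⟨fun h a b c hab hbc hac => ?_, fun h ⟨f, hf⟩ => ?_⟩
  · by_contra hba
    have hba : π b < π a := lt_of_le_of_ne (not_lt.1 hba) (π.injective.ne hab.ne')
    refine h ⟨tripleEmbedding hab hbc, fun p q => ?_⟩
    fin_cases p <;> fin_cases q <;> simp [tripleEmbedding] <;> order
  · have := h (f 0) (f 1) (f 2) (f.lt_iff_lt.2 (by decide)) (f.lt_iff_lt.2 (by decide))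
      ((hf 0 2).1 (by decide))
    exact lt_asymm this ((hf 1 0).1 (by decide))

theorem map_Ioo_eq_Ioo
    (h132 : ∀ a b c : Fin n, a < b → b < c → π a < π c → π b < π c)
    (h213 : ∀ a b c : Fin n, a < b → b < c → π a < π c → π a < π b)
    {i j : Fin n} (hij : i < j) (hπ : π i < π j) :
    (Finset.Ioo i j).map π.toEmbedding = Finset.Ioo (π i) (π j) := by
  ext v
  obtain ⟨m, rfl⟩ := π.surjective v
  simp only [Finset.mem_map_equiv, Equiv.symm_apply_apply, Finset.mem_Ioo]
  refine ⟨fun ⟨him, hmj⟩ => ⟨h213 i m j him hmj hπ, h132 i m j him hmj hπ⟩,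
    fun ⟨hiv, hvj⟩ => ⟨?_, ?_⟩⟩
  · by_contra hmi
    have hmi : m < i := lt_of_le_of_ne (not_lt.1 hmi) (by rintro rfl; exact hiv.false)
    exact (h213 m i j hmi hij hvj).not_gt hiv
  · by_contra hjm
    have hjm : j < m := lt_of_le_of_ne (not_lt.1 hjm) (by rintro rfl; exact hvj.false)
    exact (h132 i j m hij hjm hiv).not_gt hvj

theorem avoidsPat_132_and_213_iff :
    AvoidsPat π [1, 3, 2] ∧ AvoidsPat π [2, 1, 3] ↔ AllAscents (· = ·) (oneLine π) := by
  rw [avoidsPat_132_iff, avoidsPat_213_iff, allAscents_oneLine_iff]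
  refine ⟨fun ⟨h132, h213⟩ i j hij hπ => ?_, fun h => ⟨?_, ?_⟩⟩
  · rcases hij.eq_or_lt with rfl | hij
    · simp
    rcases hπ.eq_or_lt with hπ | hπ
    · exact absurd (π.injective hπ) hij.ne
    have := congrArg Finset.card (map_Ioo_eq_Ioo h132 h213 hij hπ)
    rw [Finset.card_map, Fin.card_Ioo, Fin.card_Ioo] at this
    rw [Fin.lt_def] at hij hπ
    omega
  · intro a b c hab hbc hac
    by_contra hcb
    have := h a b hab.le (hac.le.trans (le_of_not_gt hcb))
    have := h a c (hab.trans hbc).le hac.le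
    rw [Fin.lt_def] at hab hbc hac hcb
    omega
  · intro a b c hab hbc hac
    by_contra hba
    have := h b c hbc.le ((le_of_not_gt hba).trans_lt hac).le
    have := h a c (hab.trans hbc).le hac.le
    rw [Fin.lt_def] at hab hbc hac hba
    omega

theorem apply_eq_add_sub_of_allAscents_eq (h : AllAscents (· = ·) (oneLine π)) {i m j : Fin n}
    (him : i ≤ m) (hmj : m ≤ j) (hπ : π i ≤ π j) : (π m : ℕ) = π i + (m - i) := by
  rw [allAscents_oneLine_iff] at h
  by_cases hπm : π i ≤ π m
  · have := h i m him hπm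
    rw [Fin.le_def] at him hπm
    omega
  · have := h m j hmj ((le_of_not_ge hπm).trans hπ)
    have := h i j (him.trans hmj) hπ
    rw [Fin.le_def] at him hmj hπ hπm
    omega

theorem avoidsPat_increasing_iff {k : ℕ} (hk : 2 ≤ k) (hR : AllAscents (· = ·) (oneLine π)) :
    AvoidsPat π ((List.range k).map (· + 1)) ↔ AllAscents (fun d _ => d < k - 1) (oneLine π) := by
  rw [allAscents_oneLine_iff]
  have hget (p : Fin ((List.range k).map (· + 1)).length) :
      ((List.range k).map (· + 1)).get p = (p : ℕ) + 1 := by simp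
  refine ⟨fun h i j hij hπ => ?_, fun h ⟨f, hf⟩ => ?_⟩
  · by_contra hgap
    have hle (p : Fin ((List.range k).map (· + 1)).length) : (i : ℕ) + p ≤ j := by
      have : (p : ℕ) < k := by simpa using p.isLt
      omega
    have hlt (p : Fin ((List.range k).map (· + 1)).length) : (i : ℕ) + p < n :=
      (hle p).trans_lt j.isLt
    have hval (p : Fin ((List.range k).map (· + 1)).length) :
        (π ⟨i + p, hlt p⟩ : ℕ) = π i + p := by
      rw [apply_eq_add_sub_of_allAscents_eq hR (Fin.le_def.2 (Nat.le_add_right _ _))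
        (Fin.le_def.2 (hle p)) hπ]
      simp
    refine h ⟨OrderEmbedding.ofStrictMono (fun p => ⟨i + p, hlt p⟩)
      fun p q hpq => Fin.mk_lt_mk.2 (Nat.add_lt_add_left hpq _), fun p q => ?_⟩
    change _ ↔ π ⟨i + p, hlt p⟩ < π ⟨i + q, hlt q⟩
    rw [hget, hget, Fin.lt_def, hval, hval]
    omega
  · have h0 : 0 < ((List.range k).map (· + 1)).length := by simp; omega
    have hlast : k - 1 < ((List.range k).map (· + 1)).length := by simp; omega
    have hspan := Fin.val_sub_le_of_orderEmbedding f (i := ⟨0, h0⟩) (j := ⟨k - 1, hlast⟩)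
      (Fin.le_def.2 (Nat.zero_le _))
    have := h _ _ (f.le_iff_le.2 (Fin.le_def.2 (Nat.zero_le _)))
      ((hf ⟨0, h0⟩ ⟨k - 1, hlast⟩).1 (by rw [hget, hget]; simp; omega)).le
    simp only [Nat.sub_zero] at hspan
    omega

theorem avoidsPat_increasing_132_213_iff {k : ℕ} (hk : 2 ≤ k) :
    (AvoidsPat π ((List.range k).map (· + 1)) ∧ AvoidsPat π [1, 3, 2] ∧ AvoidsPat π [2, 1, 3]) ↔
      AllAscents (fun d e => d = e ∧ d < k - 1) (oneLine π) := by
  rw [allAscents_and (Q := (· = ·)) (R := fun d _ => d < k - 1), ← avoidsPat_132_and_213_iff]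
  constructor
  · rintro ⟨hinc, hR⟩
    exact ⟨hR, (avoidsPat_increasing_iff hk (avoidsPat_132_and_213_iff.1 hR)).1 hinc⟩
  · rintro ⟨hR, hinc⟩
    exact ⟨(avoidsPat_increasing_iff hk (avoidsPat_132_and_213_iff.1 hR)).2 hinc, hR⟩

end Perm

end PermPattern

open PermPattern in
theorem avoid_12k_132_213_equiv_tilings_general (n k : ℕ) (hk : 2 ≤ k) :
    Nonempty
      ({π : Equiv.Perm (Fin n) //
          AvoidsPat π ((List.range k).map (· + 1)) ∧ AvoidsPat π [1, 3, 2] ∧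
          AvoidsPat π [2, 1, 3]} ≃
        {l : List ℕ // l.sum = n ∧ ∀ x ∈ l, 1 ≤ x ∧ x ≤ k - 1}) :=
  ⟨((permEquivPermRange n).subtypeEquiv fun _ => avoidsPat_increasing_132_213_iff hk).trans <|
    (Equiv.subtypeSubtypeEquivSubtypeInter _ _).trans (reverseLayeredEquiv n (k - 1)).symm⟩

theorem avoid_12k_132_213_equiv_tilings (n k : ℕ) (hn : 1 ≤ n) (hk : 2 ≤ k) :
    Nonempty
      ({π : Equiv.Perm (Fin n) //
          AvoidsPat π ((List.range k).map (· + 1)) ∧ AvoidsPat π [1, 3, 2] ∧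
          AvoidsPat π [2, 1, 3]} ≃
        {l : List ℕ // l.sum = n ∧ ∀ x ∈ l, 1 ≤ x ∧ x ≤ k - 1}) :=
  avoid_12k_132_213_equiv_tilings_general n k hk
end

section
/- Fix k ≥ 2 and n ≥ 1. If π is a permutation of [n] avoiding 132, 213, and 23…k1 and π^{-1}(n) ≥ k−1, then π is the identity permutation 12…n. -/
lemma pat3 {n : ℕ} (π : Equiv.Perm (Fin n)) (a b c : ℕ) (i j l : Fin n)
    (hij : i < j) (hjl : j < l)
    (h01 : a < b ↔ π i < π j) (h02 : a < c ↔ π i < π l) (h12 : b < c ↔ π j < π l)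
    (h10 : b < a ↔ π j < π i) (h20 : c < a ↔ π l < π i) (h21 : c < b ↔ π l < π j)
    (hav : AvoidsPat π [a, b, c]) : False := by
  apply hav
  have hsm : StrictMono (fun t : Fin ([a,b,c].length) => ![i, j, l] t) := by
    intro u v huv
    fin_cases u <;> fin_cases v <;>
      simp_all [Matrix.cons_val_zero, Matrix.cons_val_one] <;>
      first | exact hij | exact hjl | exact hij.trans hjl
  refine ⟨OrderEmbedding.ofStrictMono _ hsm, ?_⟩
  intro u v
  fin_cases u <;> fin_cases v <;>
    simp_all [OrderEmbedding.ofStrictMono, Matrix.cons_val_zero, Matrix.cons_val_one]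

theorem avoid_132_213_23k1_position_bound (n k : ℕ) (hn : 1 ≤ n) (hk : 2 ≤ k)
    (π : Equiv.Perm (Fin n))
    (h1 : AvoidsPat π [1, 3, 2]) (h2 : AvoidsPat π [2, 1, 3])
    (h3 : AvoidsPat π (((List.range (k - 1)).map (· + 2)) ++ [1]))
    (p : Fin n) (hp : (π p : ℕ) = n - 1) (hpk : k - 1 ≤ (p : ℕ) + 1) :
    π = 1 := by
  -- π p is the maximum value
  have hmax : ∀ i : Fin n, i ≠ p → π i < π p := by
    intro i hi
    have hne : (π i : ℕ) ≠ (π p : ℕ) := by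
      simpa [Fin.val_inj] using fun h => hi (π.injective (Fin.val_inj.mp h))
    have h2' : (π i : ℕ) < n := (π i).isLt
    rw [Fin.lt_def]
    omega
  -- π is strictly increasing on positions ≤ p
  have mono_pre : ∀ i j : Fin n, i < j → j ≤ p → π i < π j := by
    intro i j hij hjp
    rcases eq_or_lt_of_le hjp with rfl | hjp
    · exact hmax i hij.ne
    · rcases lt_trichotomy (π i) (π j) with h | h | h
      · exact h
      · exact absurd (π.injective h) hij.ne
      · exact absurd h2 fun hav => pat3 π 2 1 3 i j p hij hjp
          (by simp [h.asymm]) (by simp [hmax i (hij.trans hjp).ne])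
          (by simp [hmax j hjp.ne]) (by simp [h])
          (by simp [(hmax i (hij.trans hjp).ne).asymm])
          (by simp [(hmax j hjp.ne).asymm]) hav
  -- everything after p is smaller than everything up to p
  have hq_small : ∀ q : Fin n, p < q → ∀ i : Fin n, i ≤ p → π q < π i := by
    intro q hpq i hip
    rcases eq_or_lt_of_le hip with rfl | hip
    · exact hmax q hpq.ne'
    · rcases lt_trichotomy (π q) (π i) with h | h | h
      · exact h
      · exact absurd (π.injective h) (hip.trans hpq).ne'
      · exact absurd h1 fun hav => pat3 π 1 3 2 i p q hip hpq
          (by simp [hmax i hip.ne]) (by simp [h]) (by simp [(hmax q hpq.ne').asymm])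
          (by simp [(hmax i hip.ne).asymm]) (by simp [h.asymm])
          (by simp [hmax q hpq.ne']) hav
  -- there is nothing after p
  have htop : ∀ i : Fin n, i ≤ p := by
    by_contra hc
    push_neg at hc
    obtain ⟨q, hq⟩ := hc
    apply h3
    set s3 := ((List.range (k - 1)).map (· + 2)) ++ [1] with hs3
    have hlen : s3.length = k := by simp [hs3]; omega
    have hk2p : k - 2 ≤ (p : ℕ) := by omega
    -- the positions: p-(k-2), ..., p, q
    have hbnd : ∀ t : Fin s3.length, (t : ℕ) < k - 1 → (p : ℕ) - (k - 2) + t < n := by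
      intro t ht
      have : (p : ℕ) < n := p.isLt
      omega
    set F : Fin s3.length → Fin n := fun t =>
      if h : (t : ℕ) < k - 1 then ⟨(p : ℕ) - (k - 2) + t, hbnd t h⟩ else q with hF
    have hFp : ∀ t : Fin s3.length, (t : ℕ) < k - 1 → F t ≤ p := by
      intro t ht
      simp only [hF, dif_pos ht, Fin.le_def]
      omega
    have hsm : StrictMono F := by
      intro u v huv
      have hv : (v : ℕ) < k := hlen ▸ v.isLt
      by_cases hvk : (v : ℕ) < k - 1
      · have huk : (u : ℕ) < k - 1 := lt_trans huv hvk
        simp only [hF, dif_pos hvk, dif_pos huk, Fin.lt_def]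
        have : (u : ℕ) < (v : ℕ) := huv
        omega
      · have huk : (u : ℕ) < k - 1 := by
          have hu : (u : ℕ) < k := hlen ▸ u.isLt
          have : (u : ℕ) < (v : ℕ) := huv
          omega
        have e : F v = q := by simp only [hF]; rw [dif_neg hvk]
        rw [e]
        exact lt_of_le_of_lt (hFp u huk) hq
    -- values of the pattern list
    have hget : ∀ t : Fin s3.length, s3.get t = if (t : ℕ) < k - 1 then (t : ℕ) + 2 else 1 := by
      intro t
      have h' : s3.get t = s3[(t : ℕ)]'(t.isLt) := rfl
      rw [h']
      have ht' : (t : ℕ) < k := hlen ▸ t.isLt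
      by_cases ht : (t : ℕ) < k - 1
      · rw [if_pos ht]
        simp only [hs3]
        rw [List.getElem_append_left (by simpa using ht)]
        simp
      · rw [if_neg ht]
        simp only [hs3]
        rw [List.getElem_append_right (by simpa using ht)]
        have h0 : (t : ℕ) - ((List.range (k - 1)).map (· + 2)).length = 0 := by
          simp; omega
        simp [h0]
    refine ⟨OrderEmbedding.ofStrictMono F hsm, ?_⟩
    intro u v
    have hu' : (u : ℕ) < k := hlen ▸ u.isLt
    have hv' : (v : ℕ) < k := hlen ▸ v.isLt
    rw [hget u, hget v]
    show _ ↔ π (F u) < π (F v)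
    by_cases hu : (u : ℕ) < k - 1 <;> by_cases hv : (v : ℕ) < k - 1
    · rw [if_pos hu, if_pos hv]
      constructor
      · intro h
        have huv : u < v := by simp only [Fin.lt_def]; omega
        exact mono_pre (F u) (F v) (hsm huv) (hFp v hv)
      · intro h
        rcases lt_trichotomy (u : ℕ) (v : ℕ) with hh | hh | hh
        · omega
        · exact absurd h (by simp [hF, Fin.val_inj.mp hh])
        · have : π (F v) < π (F u) :=
            mono_pre (F v) (F u) (hsm (by simp only [Fin.lt_def]; omega)) (hFp u hu)
          exact absurd h this.asymm
    · rw [if_pos hu, if_neg hv]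
      have : π (F v) < π (F u) := by
        simp only [hF, dif_neg hv]
        exact hq_small q hq (F u) (hFp u hu)
      simp [this.asymm]
    · rw [if_neg hu, if_pos hv]
      have : π (F u) < π (F v) := by
        simp only [hF, dif_neg hu]
        exact hq_small q hq (F v) (hFp v hv)
      simp [this]
    · have : (u : ℕ) = (v : ℕ) := by omega
      have huv : u = v := Fin.val_inj.mp this
      simp [huv]
  -- now π is strictly monotone everywhere, hence the identity
  have hsm : StrictMono (⇑π) := fun i j hij => mono_pre i j hij (htop j)
  have hid : StrictMono (id : Fin n → Fin n) := strictMono_id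
  have hwf : WellFoundedLT (Fin n) := Finite.to_wellFoundedLT
  have : ⇑π = id := by
    refine (hsm.range_inj hid).1 ?_
    rw [Set.range_id, Set.range_eq_univ]
    exact π.surjective
  ext i
  simp [this]
end
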